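/- arXiv:2301.09073 — 8 statements merged into one kernel-verified Lean document; each statement's English description precedes it below -/
import Mathlib

section
/- Let p be a prime and let R be a discrete valuation ring of characteristic p with maximal ideal 𝔪, and let m ≥ 1 be an integer. Then the p-th power map u ↦ u^p induces a group isomorphism from the quotient group (1+𝔪)/(1+𝔪^{⌈m/p⌉}) onto the image of the p-th power endomorphism of the group (1+𝔪)/(1+𝔪^m), i.e., onto the subgroup of classes of p-th powers in (1+𝔪)/(1+𝔪^m). -/
/-!
In characteristic `p` one has `u ^ p - 1 = (u - 1) ^ p`, so the class of `u ∈ 1 + 𝔪` is killed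
by the `p`-th power map of `(1 + 𝔪) / (1 + 𝔪 ^ m)` exactly when `(u - 1) ^ p ∈ 𝔪 ^ m`.
In a discrete valuation ring valuations multiply by `p` under `x ↦ x ^ p`, so this happens
exactly when `u - 1 ∈ 𝔪 ^ ⌈m / p⌉`. The theorem is then the first isomorphism theorem for the
`p`-th power map.
-/

def Ideal.principalUnits {R : Type*} [CommRing R] (I : Ideal R) : Subgroup Rˣ :=
  (Units.map (Ideal.Quotient.mk I : R →* R ⧸ I)).ker

theorem Ideal.mem_principalUnits {R : Type*} [CommRing R] {I : Ideal R} {u : Rˣ} :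
    u ∈ I.principalUnits ↔ (u : R) - 1 ∈ I := by
  rw [principalUnits, MonoidHom.mem_ker, Units.ext_iff, Units.coe_map, Units.val_one,
    MonoidHom.coe_coe, ← map_one (Ideal.Quotient.mk I), Ideal.Quotient.eq]

theorem Ideal.pow_mem_principalUnits_iff {R : Type*} [CommRing R] {p : ℕ} [ExpChar R p]
    {I : Ideal R} {u : Rˣ} : u ^ p ∈ I.principalUnits ↔ ((u : R) - 1) ^ p ∈ I := by
  rw [mem_principalUnits, Units.val_pow_eq_pow_val, sub_pow_expChar, one_pow]

theorem IsDiscreteValuationRing.pow_mem_maximalIdeal_pow_iff {R : Type*} [CommRing R]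
    [IsDomain R] [IsDiscreteValuationRing R] {p : ℕ} (hp : 0 < p) (m : ℕ) (x : R) :
    x ^ p ∈ IsLocalRing.maximalIdeal R ^ m ↔ x ∈ IsLocalRing.maximalIdeal R ^ (m ⌈/⌉ p) := by
  obtain ⟨ϖ, hϖ⟩ := exists_irreducible R
  rw [hϖ.maximalIdeal_eq, Ideal.span_singleton_pow, Ideal.span_singleton_pow,
    Ideal.mem_span_singleton, Ideal.mem_span_singleton]
  rcases eq_or_ne x 0 with rfl | hx
  · simp [zero_pow hp.ne']
  obtain ⟨n, u, rfl⟩ := eq_unit_mul_pow_irreducible hx hϖ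
  rw [mul_pow, ← pow_mul, (u.isUnit.pow p).dvd_mul_left, u.isUnit.dvd_mul_left,
    pow_dvd_pow_iff hϖ.ne_zero hϖ.not_isUnit, pow_dvd_pow_iff hϖ.ne_zero hϖ.not_isUnit,
    ceilDiv_le_iff_le_mul hp, mul_comm]

noncomputable def QuotientGroup.powRangeEquiv {G : Type*} [CommGroup G] (N K : Subgroup G)
    (n : ℕ) (h : ∀ g : G, g ^ n ∈ N ↔ g ∈ K) :
    G ⧸ K ≃* (powMonoidHom (α := G ⧸ N) n).range :=
  let φ := (powMonoidHom (α := G ⧸ N) n).comp (mk' N)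
  have hker : φ.ker = K := by
    ext g
    rw [MonoidHom.mem_ker, MonoidHom.comp_apply, powMonoidHom_apply, mk'_apply, ← mk_pow,
      eq_one_iff, h]
  have hrange : φ.range = (powMonoidHom (α := G ⧸ N) n).range := by
    rw [MonoidHom.range_comp, MonoidHom.range_eq_top_of_surjective _ (mk'_surjective N),
      ← MonoidHom.range_eq_map]
  ((quotientMulEquivOfEq hker.symm).trans (quotientKerEquivRange φ)).trans
    (MulEquiv.subgroupCongr hrange)

theorem QuotientGroup.powRangeEquiv_mk {G : Type*} [CommGroup G] (N K : Subgroup G) (n : ℕ)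
    (h : ∀ g : G, g ^ n ∈ N ↔ g ∈ K) (g : G) :
    (powRangeEquiv N K n h g : G ⧸ N) = (g : G ⧸ N) ^ n :=
  rfl

theorem stmt1_general (p : ℕ) (hp : p.Prime) (R : Type*) [CommRing R] [IsDomain R]
    [IsDiscreteValuationRing R] [CharP R p] (m : ℕ) :
    ∃ U : ℕ → Subgroup Rˣ,
      (∀ k : ℕ, ∀ u : Rˣ, u ∈ U k ↔ (u : R) - 1 ∈ (IsLocalRing.maximalIdeal R) ^ k) ∧
      ∃ e : ((U 1) ⧸ ((U ((m + p - 1) / p)).subgroupOf (U 1))) ≃*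
            (powMonoidHom (α := (U 1) ⧸ ((U m).subgroupOf (U 1))) p).range,
        ∀ u : (U 1 : Subgroup Rˣ),
          ((e (QuotientGroup.mk u) : ((U 1) ⧸ ((U m).subgroupOf (U 1)))))
            = (QuotientGroup.mk u : (U 1) ⧸ ((U m).subgroupOf (U 1))) ^ p := by
  have : Fact p.Prime := ⟨hp⟩
  let U k := (IsLocalRing.maximalIdeal R ^ k).principalUnits
  have pow_mem_iff (u : U 1) :
      u ^ p ∈ (U m).subgroupOf (U 1) ↔ u ∈ (U (m ⌈/⌉ p)).subgroupOf (U 1) := by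
    rw [Subgroup.mem_subgroupOf, Subgroup.mem_subgroupOf, Subgroup.coe_pow,
      Ideal.pow_mem_principalUnits_iff, Ideal.mem_principalUnits,
      IsDiscreteValuationRing.pow_mem_maximalIdeal_pow_iff hp.pos]
  exact ⟨U, fun _ _ ↦ Ideal.mem_principalUnits,
    QuotientGroup.powRangeEquiv _ _ p pow_mem_iff,
    QuotientGroup.powRangeEquiv_mk _ _ p pow_mem_iff⟩

/-- Let `p` be a prime and `R` a discrete valuation ring of characteristic
`p` with maximal ideal `𝔪`, and let `m ≥ 1`.  Then `u ↦ u^p` induces a group isomorphism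
from `(1+𝔪)/(1+𝔪^⌈m/p⌉)` onto the image of the `p`-th power endomorphism of
`(1+𝔪)/(1+𝔪^m)`.  (Here `⌈m/p⌉ = (m + p - 1) / p` in natural-number arithmetic, and
`U k` denotes the subgroup `1 + 𝔪^k` of `Rˣ`.) -/
theorem stmt1 (p : ℕ) (hp : p.Prime) (R : Type*) [CommRing R] [IsDomain R]
    [IsDiscreteValuationRing R] [CharP R p] (m : ℕ) (hm : 1 ≤ m) :
    ∃ U : ℕ → Subgroup Rˣ,
      (∀ k : ℕ, ∀ u : Rˣ, u ∈ U k ↔ (u : R) - 1 ∈ (IsLocalRing.maximalIdeal R) ^ k) ∧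
      ∃ e : ((U 1) ⧸ ((U ((m + p - 1) / p)).subgroupOf (U 1))) ≃*
            (powMonoidHom (α := (U 1) ⧸ ((U m).subgroupOf (U 1))) p).range,
        ∀ u : (U 1 : Subgroup Rˣ),
          ((e (QuotientGroup.mk u) : ((U 1) ⧸ ((U m).subgroupOf (U 1)))))
            = (QuotientGroup.mk u : (U 1) ⧸ ((U m).subgroupOf (U 1))) ^ p :=
  stmt1_general p hp R m
end

section
/- Let p be a prime and let R be a discrete valuation ring of characteristic p whose residue field is finite with q elements, and let m ≥ 1 be an integer. Set W := (1+𝔪)/(1+𝔪^m), where 𝔪 is the maximal ideal of R. Then the quotient W/W^p of W by its subgroup of p-th powers is a finite group of order q^{m − ⌈m/p⌉}. -/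
/-!
In characteristic `p` we have `(1 + x) ^ p = 1 + x ^ p`, and in a discrete valuation ring
`x ^ p ∈ 𝔪 ^ m ↔ x ∈ 𝔪 ^ ⌈m/p⌉`; so the kernel of the `p`-th power map of the finite group
`W = (1 + 𝔪)/(1 + 𝔪 ^ m)` is the image of `1 + 𝔪 ^ c`, `c = ⌈m/p⌉`, and `|W/Wᵖ| = |ker|`.
The map `u ↦ u - 1` is not a homomorphism, but it is a bijection of `(1 + 𝔪)/(1 + 𝔪 ^ m)` onto
`𝔪/𝔪 ^ m` carrying that kernel onto `𝔪 ^ c/𝔪 ^ m`, which has `q ^ (m - c)` elements.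
-/

namespace Ideal

variable {R : Type*} [CommRing R]

def oneAddUnits (I : Ideal R) : Subgroup Rˣ :=
  (Units.map (Ideal.Quotient.mk I : R →* R ⧸ I)).ker

theorem mem_oneAddUnits {I : Ideal R} {u : Rˣ} : u ∈ I.oneAddUnits ↔ (u : R) - 1 ∈ I := by
  rw [oneAddUnits, MonoidHom.mem_ker, Units.ext_iff, Units.coe_map, Units.val_one,
    MonoidHom.coe_coe, ← map_one (Ideal.Quotient.mk I), Ideal.Quotient.eq]

theorem inv_mul_mem_oneAddUnits_iff {I : Ideal R} {u v : Rˣ} :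
    u⁻¹ * v ∈ I.oneAddUnits ↔ (v : R) - u ∈ I := by
  have h : ((u⁻¹ * v : Rˣ) : R) - 1 = ((u⁻¹ : Rˣ) : R) * (v - u) := by
    rw [mul_sub, Units.inv_mul, Units.val_mul]
  rw [mem_oneAddUnits, h, unit_mul_mem_iff_mem I (u⁻¹).isUnit]

variable (I J : Ideal R)

def oneAddUnitsQuotientSubOne :
    J.oneAddUnits ⧸ I.oneAddUnits.subgroupOf J.oneAddUnits → R ⧸ I :=
  _root_.Quotient.lift (fun u => Ideal.Quotient.mk I (((u : Rˣ) : R) - 1)) fun u v huv => by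
    rw [Ideal.Quotient.eq, sub_sub_sub_cancel_right, ← neg_mem_iff, neg_sub,
      ← inv_mul_mem_oneAddUnits_iff]
    exact Subgroup.mem_subgroupOf.mp (QuotientGroup.leftRel_apply.mp huv)

theorem oneAddUnitsQuotientSubOne_mk (u : J.oneAddUnits) :
    oneAddUnitsQuotientSubOne I J u = Ideal.Quotient.mk I (((u : Rˣ) : R) - 1) := rfl

theorem oneAddUnitsQuotientSubOne_injective :
    Function.Injective (oneAddUnitsQuotientSubOne I J) := by
  intro a b h
  induction a using QuotientGroup.induction_on with | H u => ?_
  induction b using QuotientGroup.induction_on with | H v => ?_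
  rw [QuotientGroup.eq, Subgroup.mem_subgroupOf, Subgroup.coe_mul, Subgroup.coe_inv,
    inv_mul_mem_oneAddUnits_iff, ← sub_sub_sub_cancel_right _ _ 1, ← Ideal.Quotient.eq]
  exact h.symm

theorem range_oneAddUnitsQuotientSubOne (hJ : J ≤ jacobson ⊥) :
    Set.range (oneAddUnitsQuotientSubOne I J) = J.map (Ideal.Quotient.mk I) := by
  ext x
  constructor
  · rintro ⟨⟨u⟩, rfl⟩
    exact mem_map_of_mem _ (mem_oneAddUnits.mp u.2)
  · intro hx
    obtain ⟨y, hy, rfl⟩ := (mem_map_iff_of_surjective _ Ideal.Quotient.mk_surjective).mp hx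
    have hunit : IsUnit (1 + y) := by
      simpa [add_comm] using mem_jacobson_bot.mp (hJ hy) 1
    refine ⟨QuotientGroup.mk ⟨hunit.unit, mem_oneAddUnits.mpr ?_⟩, ?_⟩
    · simpa using hy
    · simp [oneAddUnitsQuotientSubOne_mk]

theorem oneAddUnits_mk_pow_eq_one_iff (u : J.oneAddUnits) (n : ℕ) :
    (QuotientGroup.mk u : J.oneAddUnits ⧸ I.oneAddUnits.subgroupOf J.oneAddUnits) ^ n = 1 ↔
      ((u : Rˣ) : R) ^ n - 1 ∈ I := by
  rw [← QuotientGroup.mk_pow, QuotientGroup.eq_one_iff, Subgroup.mem_subgroupOf, mem_oneAddUnits,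
    Subgroup.coe_pow, Units.val_pow_eq_pow_val]

instance [Finite (R ⧸ I)] :
    Finite (J.oneAddUnits ⧸ I.oneAddUnits.subgroupOf J.oneAddUnits) :=
  .of_injective _ (oneAddUnitsQuotientSubOne_injective I J)

end Ideal

open Ideal

namespace IsDiscreteValuationRing

variable {R : Type*} [CommRing R] [IsDomain R] [IsDiscreteValuationRing R]

local notation "𝔪" => IsLocalRing.maximalIdeal R

theorem pow_mem_maximalIdeal_pow_iff_s2 {n : ℕ} (hn : 0 < n) (m : ℕ) {x : R} :
    x ^ n ∈ 𝔪 ^ m ↔ x ∈ 𝔪 ^ ((m + n - 1) / n) := by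
  obtain ⟨ϖ, hϖ⟩ := exists_irreducible R
  simp only [hϖ.maximalIdeal_eq, span_singleton_pow, mem_span_singleton, ← addVal_le_iff_dvd,
    hϖ.addVal_pow, addVal_pow]
  induction addVal R x using ENat.recTopCoe with
  | top => simp [hn.ne']
  | coe k =>
    rw [nsmul_eq_mul]
    norm_cast
    rw [Nat.div_le_iff_le_mul_add_pred hn]
    omega

theorem card_quotient_maximalIdeal_pow (n : ℕ) :
    Nat.card (R ⧸ 𝔪 ^ n) = Nat.card (IsLocalRing.ResidueField R) ^ n :=
  cardQuot_pow_of_prime (not_a_field R)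

theorem card_map_maximalIdeal_pow [Finite (IsLocalRing.ResidueField R)] {c m : ℕ} (h : c ≤ m) :
    Nat.card ((𝔪 ^ c).map (Ideal.Quotient.mk (𝔪 ^ m))) =
      Nat.card (IsLocalRing.ResidueField R) ^ (m - c) := by
  have hq : 0 < Nat.card (IsLocalRing.ResidueField R) ^ c := pow_pos Nat.card_pos c
  refine Nat.eq_of_mul_eq_mul_right hq ?_
  rw [pow_sub_mul_pow _ h, ← card_quotient_maximalIdeal_pow, ← card_quotient_maximalIdeal_pow,
    map_eq_submodule_map]
  exact Submodule.card_quotient_mul_card_quotient (𝔪 ^ c) (𝔪 ^ m) (Ideal.pow_le_pow_right h)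

local notation "𝕎" m:max =>
  Ideal.oneAddUnits (𝔪 ^ 1) ⧸
    Subgroup.subgroupOf (Ideal.oneAddUnits (𝔪 ^ m)) (Ideal.oneAddUnits (𝔪 ^ 1))

instance [Finite (IsLocalRing.ResidueField R)] (n : ℕ) : Finite (R ⧸ 𝔪 ^ n) :=
  Nat.finite_of_card_ne_zero <| by
    rw [card_quotient_maximalIdeal_pow]
    exact pow_ne_zero _ Nat.card_pos.ne'

theorem card_quotient_range_powMonoidHom_oneAddUnits {p : ℕ} [Fact p.Prime] [CharP R p]
    [Finite (IsLocalRing.ResidueField R)] {m : ℕ} (hm : 1 ≤ m) :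
    Nat.card (𝕎 m ⧸ (powMonoidHom (α := 𝕎 m) p).range) =
      Nat.card (IsLocalRing.ResidueField R) ^ (m - (m + p - 1) / p) := by
  have hp : 0 < p := (Fact.out : p.Prime).pos
  set c := (m + p - 1) / p
  have hc : 1 ≤ c := (Nat.le_div_iff_mul_le hp).mpr (by omega)
  have hcm : c ≤ m :=
    (Nat.div_le_iff_le_mul_add_pred hp).mpr (by have := Nat.le_mul_of_pos_left m hp; omega)
  have hker : ((powMonoidHom (α := 𝕎 m) p).ker : Set (𝕎 m)) =
      oneAddUnitsQuotientSubOne (𝔪 ^ m) (𝔪 ^ 1) ⁻¹' (𝔪 ^ c).map (Ideal.Quotient.mk (𝔪 ^ m)) := by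
    ext g
    induction g using QuotientGroup.induction_on with | H u => ?_
    rw [SetLike.mem_coe, MonoidHom.mem_ker, powMonoidHom_apply, oneAddUnits_mk_pow_eq_one_iff,
      Set.mem_preimage, oneAddUnitsQuotientSubOne_mk, SetLike.mem_coe,
      mem_quotient_iff_mem (pow_le_pow_right hcm), ← pow_mem_maximalIdeal_pow_iff_s2 hp, sub_pow_char,
      one_pow]
  have hsub : ((𝔪 ^ c).map (Ideal.Quotient.mk (𝔪 ^ m)) : Set (R ⧸ 𝔪 ^ m)) ⊆
      Set.range (oneAddUnitsQuotientSubOne (𝔪 ^ m) (𝔪 ^ 1)) := by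
    rw [range_oneAddUnitsQuotientSubOne _ _
      (by rw [pow_one, IsLocalRing.jacobson_eq_maximalIdeal ⊥ bot_ne_top])]
    exact map_mono (pow_le_pow_right hc)
  rw [← Subgroup.index, Subgroup.index_range, ← SetLike.coe_sort_coe, hker,
    Nat.card_preimage_of_injective (oneAddUnitsQuotientSubOne_injective _ _) hsub,
    SetLike.coe_sort_coe, card_map_maximalIdeal_pow hcm]

end IsDiscreteValuationRing

/-- Let `p` be a prime and `R` a discrete valuation ring of characteristic
`p` with finite residue field of cardinality `q`, and let `m ≥ 1`.  With
`W := (1+𝔪)/(1+𝔪^m)`, the quotient `W/Wᵖ` of `W` by its subgroup of `p`-th powers is a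
finite group of order `q ^ (m - ⌈m/p⌉)` (where `⌈m/p⌉ = (m + p - 1) / p`). -/
theorem stmt2 (p : ℕ) (hp : p.Prime) (R : Type*) [CommRing R] [IsDomain R]
    [IsDiscreteValuationRing R] [CharP R p]
    (q : ℕ) (hq : Nat.card (IsLocalRing.ResidueField R) = q)
    (hqfin : Finite (IsLocalRing.ResidueField R))
    (m : ℕ) (hm : 1 ≤ m) :
    ∃ U : ℕ → Subgroup Rˣ,
      (∀ k : ℕ, ∀ u : Rˣ, u ∈ U k ↔ (u : R) - 1 ∈ (IsLocalRing.maximalIdeal R) ^ k) ∧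
      (Finite (((U 1) ⧸ ((U m).subgroupOf (U 1))) ⧸
          (powMonoidHom (α := (U 1) ⧸ ((U m).subgroupOf (U 1))) p).range) ∧
        Nat.card (((U 1) ⧸ ((U m).subgroupOf (U 1))) ⧸
          (powMonoidHom (α := (U 1) ⧸ ((U m).subgroupOf (U 1))) p).range)
          = q ^ (m - (m + p - 1) / p)) := by
  have : Fact p.Prime := ⟨hp⟩
  refine ⟨fun k => (IsLocalRing.maximalIdeal R ^ k).oneAddUnits, fun _ _ => mem_oneAddUnits,
    inferInstance, ?_⟩
  rw [← hq]
  exact IsDiscreteValuationRing.card_quotient_range_powMonoidHom_oneAddUnits hm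
end

section
/- Fix a prime p and integers e ≥ 1 and n_v ≥ 1 such that p − 1 divides e·n_v. Set n_w := e·n_v, ♮ := p·n_w/(p−1), and c := n_w/(p−1). For an integer m ≥ 1 define φ_m := ⌊(m − ⌈m/p⌉)/e⌋, ψ_m := ⌈m/p⌉ + φ_m·e, and ◇_m := 1 if some integer in the half-open interval [ψ_m, m) is congruent to c modulo e, and ◇_m := 0 otherwise. Then φ_♮ + ◇_♮ = n_v. -/
/-- `⌈m/p⌉` for natural numbers. -/
def cld (p m : ℕ) : ℕ := (m + p - 1) / p

/-- `φ_m = ⌊(m - ⌈m/p⌉)/e⌋`. -/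
def phiInv (p e m : ℕ) : ℕ := (m - cld p m) / e

/-- `ψ_m = ⌈m/p⌉ + φ_m·e`. -/
def psiInv (p e m : ℕ) : ℕ := cld p m + phiInv p e m * e

open Classical in
/-- `◇_m`: `1` if some integer in `[ψ_m, m)` is congruent to `c` modulo `e`, else `0`. -/
noncomputable def diamInv (p e c m : ℕ) : ℕ :=
  if ∃ j : ℕ, psiInv p e m ≤ j ∧ j < m ∧ j % e = c % e then 1 else 0

/-- For a prime `p` and integers `e ≥ 1`, `n_v ≥ 1` with
`(p-1) ∣ e·n_v`, setting `n_w = e·n_v`, `♮ = p·n_w/(p-1)` and `c = n_w/(p-1)`, one has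
`φ_♮ + ◇_♮ = n_v`. -/
theorem stmt9 (p e nv : ℕ) (hp : p.Prime) (he : 1 ≤ e) (hnv : 1 ≤ nv)
    (hdvd : (p - 1) ∣ e * nv) :
    phiInv p e (p * (e * nv) / (p - 1)) +
      diamInv p e ((e * nv) / (p - 1)) (p * (e * nv) / (p - 1)) = nv := by
  have hp2 := hp.two_le
  obtain ⟨c, hc⟩ := hdvd
  have hd : 1 ≤ p - 1 := by omega
  have hcdiv : (e * nv) / (p - 1) = c := by
    rw [hc, Nat.mul_div_cancel_left _ (by omega)]
  have hm : p * (e * nv) / (p - 1) = p * c := by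
    rw [hc, mul_left_comm, Nat.mul_div_cancel_left _ (by omega : 0 < p - 1)]
  rw [hm, hcdiv]
  have hcld : cld p (p * c) = c := by
    unfold cld
    have : p * c + p - 1 = p * c + (p - 1) := by omega
    rw [this, Nat.mul_add_div (by omega : 0 < p), Nat.div_eq_of_lt (by omega : p - 1 < p), Nat.add_zero]
  have hphi : phiInv p e (p * c) = nv := by
    unfold phiInv
    rw [hcld]
    have : p * c - c = (p - 1) * c := by rw [Nat.sub_mul, one_mul]
    rw [this, ← hc, mul_comm e nv, Nat.mul_div_cancel _ (by omega)]
  rw [hphi]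
  have hpsi : psiInv p e (p * c) = p * c := by
    unfold psiInv
    rw [hcld, hphi]
    have h1 : nv * e = (p - 1) * c := by rw [mul_comm, hc]
    have h2 : (p - 1) * c = p * c - c := by rw [Nat.sub_mul, one_mul]
    have h3 : c ≤ p * c := Nat.le_mul_of_pos_left c (by omega)
    omega
  have hdiam : diamInv p e c (p * c) = 0 := by
    unfold diamInv
    rw [if_neg]
    rintro ⟨j, h1, h2, _⟩
    rw [hpsi] at h1
    omega
  omega
end

section
/- Fix a prime p, an integer e ≥ 1 dividing p − 1, and an integer n_v ≥ 1 such that p − 1 divides e·n_v. Set n_w := e·n_v, ♮ := p·n_w/(p−1), and c := n_w/(p−1). For an integer m ≥ 1 define φ_m := ⌊(m − ⌈m/p⌉)/e⌋, ψ_m := ⌈m/p⌉ + φ_m·e, and ◇_m := 1 if some integer in the half-open interval [ψ_m, m) is congruent to c modulo e, and ◇_m := 0 otherwise. Let λ_w = e·λ_v for an integer λ_v ≥ 1, with p ∤ λ_w, and define ♭ := ⌈♮ − (p−1)λ_w/p⌉ if λ_w < p(♮−1)/(p−1), and ♭ := 1 otherwise. Then the integer b̲ := φ_♮ + ◇_♮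 − φ_♭ − ◇_♭ satisfies 0 ≤ b̲ ≤ n_v; moreover, if ♭ = 1 then b̲ = n_v, and if λ_v ≥ p/(p−1) (equivalently λ_v ≥ 2, since λ_v is an integer and p ≥ 2) then b̲ ≥ 1. -/
open Classical in
/-- `♭ = ⌈♮ - (p-1)λ_w/p⌉` if `λ_w < p(♮-1)/(p-1)`, and `♭ = 1` otherwise. -/
noncomputable def flatInv (p lw nat : ℕ) : ℕ :=
  if (lw : ℚ) < (p : ℚ) * ((nat : ℚ) - 1) / ((p : ℚ) - 1) then
    (⌈(nat : ℚ) - ((p : ℚ) - 1) * (lw : ℚ) / (p : ℚ)⌉).toNat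
  else 1

open Finset

theorem card_Ico_add_mul_filter_modEq (a k : ℕ) {e : ℕ} (he : 0 < e) (v : ℕ) :
    #{x ∈ Ico a (a + k * e) | x ≡ v [MOD e]} = k := by
  have h := Nat.Ico_filter_modEq_card a (a + k * e) he v
  have hshift : (((a + k * e : ℕ) : ℚ) - v) / e = ((a : ℚ) - v) / e + (k : ℤ) := by
    push_cast; field_simp; ring
  rw [hshift, Int.ceil_add_intCast] at h
  omega

theorem card_Ico_filter_modEq_le {a b k e : ℕ} (he : 0 < e) (v : ℕ) (hb : b ≤ a + k * e) :
    #{x ∈ Ico a b | x ≡ v [MOD e]} ≤ k :=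
  card_Ico_add_mul_filter_modEq a k he v ▸
    card_le_card (filter_subset_filter _ (Ico_subset_Ico_right hb))

theorem cld_le_self (p m : ℕ) : cld p m ≤ m := by
  rcases Nat.eq_zero_or_pos p with rfl | hp
  · simp [cld]
  · have := Nat.le_mul_of_pos_left m hp
    exact (Nat.div_le_iff_le_mul_add_pred hp).2 (by omega)

theorem le_mul_cld {p : ℕ} (hp : 0 < p) (m : ℕ) : m ≤ p * cld p m := by
  have := Nat.div_add_mod (m + p - 1) p
  have := Nat.mod_lt (m + p - 1) hp
  unfold cld
  omega

theorem cld_mul_self {p : ℕ} (hp : 0 < p) (c : ℕ) : cld p (p * c) = c := by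
  unfold cld
  rw [Nat.add_sub_assoc hp, Nat.mul_add_div hp, Nat.div_eq_of_lt (by omega), add_zero]

theorem cld_one {p : ℕ} (hp : 0 < p) : cld p 1 = 1 := by
  simp [cld, Nat.div_self hp]

theorem mul_sub_cld_le (p m : ℕ) : p * (m - cld p m) ≤ (p - 1) * m := by
  rcases Nat.eq_zero_or_pos p with rfl | hp
  · simp
  · have := le_mul_cld hp m
    rw [Nat.mul_sub, Nat.sub_one_mul]
    omega

theorem phiInv_add_diamInv {e : ℕ} (he : 0 < e) (p c m : ℕ) :
    phiInv p e m + diamInv p e c m = #{x ∈ Ico (cld p m) m | x ≡ c [MOD e]} := by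
  have hψ : cld p m + phiInv p e m * e ≤ m := by
    have := Nat.div_mul_le_self (m - cld p m) e
    have := cld_le_self p m
    unfold phiInv; omega
  have hm : m ≤ cld p m + phiInv p e m * e + 1 * e := by
    have := Nat.lt_div_mul_add (a := m - cld p m) he
    unfold phiInv; omega
  rw [← Ico_union_Ico_eq_Ico (Nat.le_add_right _ _) hψ, filter_union, card_union_of_disjoint
    (disjoint_filter_filter (Ico_disjoint_Ico_consecutive _ _ _)),
    card_Ico_add_mul_filter_modEq _ _ he]
  congr 1
  unfold diamInv psiInv
  split_ifs with h
  · obtain ⟨j, hψj, hjm, hjc⟩ := h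
    exact le_antisymm (card_pos.2 ⟨j, mem_filter.2 ⟨mem_Ico.2 ⟨hψj, hjm⟩, hjc⟩⟩)
      (card_Ico_filter_modEq_le he c hm)
  · push Not at h
    refine (card_eq_zero.2 (filter_eq_empty_iff.2 fun x hx => ?_)).symm
    exact h x (mem_Ico.1 hx).1 (mem_Ico.1 hx).2

theorem phiInv_add_diamInv_le {p e c m k : ℕ} (he : 0 < e) (h : m - cld p m ≤ k * e) :
    phiInv p e m + diamInv p e c m ≤ k := by
  rw [phiInv_add_diamInv he]
  exact card_Ico_filter_modEq_le he c (by omega)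

theorem phiInv_add_diamInv_mul_self {p e c n : ℕ} (hp : 0 < p) (he : 0 < e)
    (hc : (p - 1) * c = e * n) : phiInv p e (p * c) + diamInv p e c (p * c) = n := by
  have hpc : p * c = c + n * e := by
    rw [Nat.mul_comm n, ← hc, Nat.sub_one_mul]
    have := Nat.le_mul_of_pos_left c hp
    omega
  rw [phiInv_add_diamInv he, cld_mul_self hp, hpc, card_Ico_add_mul_filter_modEq _ _ he]

theorem phiInv_add_diamInv_one {p : ℕ} (hp : 0 < p) (e c : ℕ) :
    phiInv p e 1 + diamInv p e c 1 = 0 := by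
  have hψ : psiInv p e 1 = 1 := by simp [psiInv, phiInv, cld_one hp]
  simp only [diamInv, hψ]
  simp [phiInv, cld_one hp]
  omega

theorem flatInv_eq_one_or_add_div_eq {p : ℕ} (hp : 2 ≤ p) (lw n : ℕ) :
    flatInv p lw n = 1 ∨ flatInv p lw n + (p - 1) * lw / p = n := by
  unfold flatInv
  split_ifs with h
  · right
    have hp' : (0 : ℚ) < (p : ℚ) - 1 := by
      have : (2 : ℚ) ≤ p := by exact_mod_cast hp
      linarith
    have hlt : (p - 1) * lw < p * (n - 1) := by
      rw [lt_div_iff₀ hp'] at h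
      rcases Nat.eq_zero_or_pos n with rfl | hn
      · push_cast at h; nlinarith
      qify [show 1 ≤ p by omega, hn]
      linarith
    have hD : (p - 1) * lw / p < n := by
      have := Nat.div_lt_of_lt_mul hlt
      omega
    have hceil : ⌈(n : ℚ) - ((p : ℚ) - 1) * lw / p⌉ = (n : ℤ) - ((p - 1) * lw / p : ℕ) := by
      have hcast : ((p : ℚ) - 1) * lw / p = (((p - 1) * lw : ℕ) : ℚ) / (p : ℕ) := by
        push_cast [Nat.cast_sub (by omega : 1 ≤ p)]; ring
      rw [hcast, sub_eq_neg_add, Int.ceil_add_natCast, Int.ceil_neg,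
        Rat.floor_natCast_div_natCast]
      push_cast; ring
    rw [hceil, Int.toNat_sub]
    omega
  · left; rfl

theorem mul_pred_lt_pred_mul_div {p e lw : ℕ} (hp : 1 ≤ p) (he : 1 ≤ e) (hep : e ≤ p - 1)
    (hlw : 2 * e ≤ lw) : p * (e - 1) < (p - 1) * ((p - 1) * lw / p) := by
  have hD := Nat.lt_mul_div_succ ((p - 1) * lw) (show 0 < p by omega)
  generalize (p - 1) * lw / p = D at hD ⊢
  zify [hp, he] at hep hlw hD ⊢
  set q : ℤ := (p : ℤ) - 1
  by_contra! h
  have h1 : q * (q * lw) < (q + 1) ^ 2 * (e - 1) + q * (q + 1) := by nlinarith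
  have h2 : q * (q * (2 * e)) ≤ q * (q * lw) := by gcongr <;> omega
  nlinarith [Int.le_self_sq (e : ℤ), mul_le_mul_of_nonneg_left hep (by omega : (0 : ℤ) ≤ e)]

theorem flatInv_eq_one_or_mul_sub_cld_add_le {p e n c : ℕ} (hp : 2 ≤ p)
    (hc : (p - 1) * c = e * n) (lw : ℕ) :
    flatInv p lw (p * c) = 1 ∨
      p * (flatInv p lw (p * c) - cld p (flatInv p lw (p * c))) +
        (p - 1) * ((p - 1) * lw / p) ≤ p * (n * e) := by
  refine (flatInv_eq_one_or_add_div_eq hp lw (p * c)).imp_right fun h => ?_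
  calc _ ≤ (p - 1) * flatInv p lw (p * c) + (p - 1) * ((p - 1) * lw / p) :=
        Nat.add_le_add_right (mul_sub_cld_le p _) _
    _ = p * (n * e) := by rw [← Nat.mul_add, h, Nat.mul_left_comm, hc, Nat.mul_comm e]

theorem flatInv_sub_cld_le {p e n c : ℕ} (hp : 2 ≤ p) (hc : (p - 1) * c = e * n) (lw : ℕ) :
    flatInv p lw (p * c) - cld p (flatInv p lw (p * c)) ≤ n * e := by
  rcases flatInv_eq_one_or_mul_sub_cld_add_le hp hc lw with h | h
  · simp [h, cld_one (by omega : 0 < p)]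
  · exact Nat.le_of_mul_le_mul_left (Nat.le_of_add_right_le h) (by omega)

theorem flatInv_sub_cld_le_pred {p e n c lw : ℕ} (hp : 2 ≤ p) (he : 1 ≤ e) (hep : e ≤ p - 1)
    (hc : (p - 1) * c = e * n) (hlw : 2 * e ≤ lw) :
    flatInv p lw (p * c) - cld p (flatInv p lw (p * c)) ≤ (n - 1) * e := by
  rcases flatInv_eq_one_or_mul_sub_cld_add_le hp hc lw with h | h
  · simp [h, cld_one (by omega : 0 < p)]
  · have := mul_pred_lt_pred_mul_div (by omega) he hep hlw
    set L := flatInv p lw (p * c) - cld p (flatInv p lw (p * c))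
    have : p * (L + (e - 1)) < p * (n * e) := by rw [Nat.mul_add]; omega
    have := Nat.lt_of_mul_lt_mul_left this
    rw [Nat.sub_one_mul]
    omega

theorem two_le_of_div_sub_one_le {p l : ℕ} (hp : 2 ≤ p) (h : (p : ℚ) / ((p : ℚ) - 1) ≤ l) :
    2 ≤ l := by
  have hp' : (2 : ℚ) ≤ p := by exact_mod_cast hp
  have : (1 : ℚ) < l := lt_of_lt_of_le ((one_lt_div (by linarith)).2 (by linarith)) h
  exact_mod_cast this

theorem stmt10_general (p e nv lv : ℕ) (hp : p.Prime) (he : 1 ≤ e) (hnv : 1 ≤ nv)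
    (hed : e ∣ p - 1) (hdvd : (p - 1) ∣ e * nv) :
    0 ≤ ((phiInv p e (p * (e * nv) / (p - 1)) : ℤ) +
          diamInv p e ((e * nv) / (p - 1)) (p * (e * nv) / (p - 1)) -
          phiInv p e (flatInv p (e * lv) (p * (e * nv) / (p - 1))) -
          diamInv p e ((e * nv) / (p - 1))
            (flatInv p (e * lv) (p * (e * nv) / (p - 1)))) ∧
    ((phiInv p e (p * (e * nv) / (p - 1)) : ℤ) +
          diamInv p e ((e * nv) / (p - 1)) (p * (e * nv) / (p - 1)) -
          phiInv p e (flatInv p (e * lv) (p * (e * nv) / (p - 1))) -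
          diamInv p e ((e * nv) / (p - 1))
            (flatInv p (e * lv) (p * (e * nv) / (p - 1)))) ≤ (nv : ℤ) ∧
    (flatInv p (e * lv) (p * (e * nv) / (p - 1)) = 1 →
      ((phiInv p e (p * (e * nv) / (p - 1)) : ℤ) +
          diamInv p e ((e * nv) / (p - 1)) (p * (e * nv) / (p - 1)) -
          phiInv p e (flatInv p (e * lv) (p * (e * nv) / (p - 1))) -
          diamInv p e ((e * nv) / (p - 1))
            (flatInv p (e * lv) (p * (e * nv) / (p - 1)))) = (nv : ℤ)) ∧
    ((p : ℚ) / ((p : ℚ) - 1) ≤ (lv : ℚ) →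
      1 ≤ ((phiInv p e (p * (e * nv) / (p - 1)) : ℤ) +
          diamInv p e ((e * nv) / (p - 1)) (p * (e * nv) / (p - 1)) -
          phiInv p e (flatInv p (e * lv) (p * (e * nv) / (p - 1))) -
          diamInv p e ((e * nv) / (p - 1))
            (flatInv p (e * lv) (p * (e * nv) / (p - 1))))) := by
  have hp2 := hp.two_le
  obtain ⟨c, hc⟩ := hdvd
  rw [hc, Nat.mul_div_cancel_left c (by omega), Nat.mul_left_comm,
    Nat.mul_div_cancel_left _ (by omega)]
  have hnat := phiInv_add_diamInv_mul_self (by omega) he hc.symm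
  have hflat := phiInv_add_diamInv_le (c := c) he (flatInv_sub_cld_le hp2 hc.symm (e * lv))
  have hflat_one : flatInv p (e * lv) (p * c) = 1 →
      phiInv p e (flatInv p (e * lv) (p * c)) + diamInv p e c (flatInv p (e * lv) (p * c)) = 0 :=
    fun h => h ▸ phiInv_add_diamInv_one (by omega) e c
  have hflat_pred : (p : ℚ) / ((p : ℚ) - 1) ≤ lv →
      phiInv p e (flatInv p (e * lv) (p * c)) + diamInv p e c (flatInv p (e * lv) (p * c)) ≤
        nv - 1 := fun h =>
    phiInv_add_diamInv_le he <| flatInv_sub_cld_le_pred hp2 he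
      (Nat.le_of_dvd (by omega) hed) hc.symm
      (by nlinarith [two_le_of_div_sub_one_le hp2 h])
  refine ⟨by omega, by omega, fun h => by have := hflat_one h; omega, fun h => by
    have := hflat_pred h; omega⟩

/-- For a prime `p`, `e ≥ 1` dividing `p - 1`, and `n_v ≥ 1` with
`(p-1) ∣ e·n_v`, set `n_w = e·n_v`, `♮ = p·n_w/(p-1)`, `c = n_w/(p-1)`; let
`λ_w = e·λ_v` with `λ_v ≥ 1` and `p ∤ λ_w`, and let `♭` be as above.  Then
`b̲ := φ_♮ + ◇_♮ - φ_♭ - ◇_♭` satisfies `0 ≤ b̲ ≤ n_v`; if `♭ = 1` then `b̲ = n_v`; and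
if `λ_v ≥ p/(p-1)` then `b̲ ≥ 1`. -/
theorem stmt10 (p e nv lv : ℕ) (hp : p.Prime) (he : 1 ≤ e) (hnv : 1 ≤ nv)
    (hed : e ∣ p - 1) (hdvd : (p - 1) ∣ e * nv) (hlv : 1 ≤ lv)
    (hplw : ¬ p ∣ e * lv) :
    0 ≤ ((phiInv p e (p * (e * nv) / (p - 1)) : ℤ) +
          diamInv p e ((e * nv) / (p - 1)) (p * (e * nv) / (p - 1)) -
          phiInv p e (flatInv p (e * lv) (p * (e * nv) / (p - 1))) -
          diamInv p e ((e * nv) / (p - 1))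
            (flatInv p (e * lv) (p * (e * nv) / (p - 1)))) ∧
    ((phiInv p e (p * (e * nv) / (p - 1)) : ℤ) +
          diamInv p e ((e * nv) / (p - 1)) (p * (e * nv) / (p - 1)) -
          phiInv p e (flatInv p (e * lv) (p * (e * nv) / (p - 1))) -
          diamInv p e ((e * nv) / (p - 1))
            (flatInv p (e * lv) (p * (e * nv) / (p - 1)))) ≤ (nv : ℤ) ∧
    (flatInv p (e * lv) (p * (e * nv) / (p - 1)) = 1 →
      ((phiInv p e (p * (e * nv) / (p - 1)) : ℤ) +
          diamInv p e ((e * nv) / (p - 1)) (p * (e * nv) / (p - 1)) -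
          phiInv p e (flatInv p (e * lv) (p * (e * nv) / (p - 1))) -
          diamInv p e ((e * nv) / (p - 1))
            (flatInv p (e * lv) (p * (e * nv) / (p - 1)))) = (nv : ℤ)) ∧
    ((p : ℚ) / ((p : ℚ) - 1) ≤ (lv : ℚ) →
      1 ≤ ((phiInv p e (p * (e * nv) / (p - 1)) : ℤ) +
          diamInv p e ((e * nv) / (p - 1)) (p * (e * nv) / (p - 1)) -
          phiInv p e (flatInv p (e * lv) (p * (e * nv) / (p - 1))) -
          diamInv p e ((e * nv) / (p - 1))
            (flatInv p (e * lv) (p * (e * nv) / (p - 1))))) :=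
  stmt10_general p e nv lv hp he hnv hed hdvd
end

section
/- Fix a prime p, an integer e ≥ 1 dividing p − 1, and an integer n_v ≥ 1 such that p − 1 divides e·n_v. Set n_w := e·n_v, ♮ := p·n_w/(p−1), and c := n_w/(p−1). For an integer m ≥ 1 define φ_m := ⌊(m − ⌈m/p⌉)/e⌋, ψ_m := ⌈m/p⌉ + φ_m·e, and ◇_m := 1 if some integer in the half-open interval [ψ_m, m) is congruent to c modulo e, and ◇_m := 0 otherwise. Let λ_w := e·λ_v for an integer λ_v ≥ 1 with p ∤ λ_w, and define ♭ := ⌈♮ − (p−1)λ_w/p⌉ if λ_w < p(♮−1)/(p−1) and ♭ := 1 otherwise, and ♯ := ⌈♮ + (p−1)λ_w/p⌉ if λ_w < p♮ and ♯ := p♮ otherwise. Then the integer b̄ := φ_♯ + ◇_♯ − φ_♭ − ◇_♭ equals 0 if and only if λ_v = 1; moreover, if λ_v = 1 then φ_♯ + ◇_♯ = φ_♭ + ◇_♭ = n_v. -/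
open Classical in
/-- `♯ = ⌈♮ + (p-1)λ_w/p⌉` if `λ_w < p♮`, and `♯ = p♮` otherwise. -/
noncomputable def sharpInv (p lw nat : ℕ) : ℕ :=
  if (lw : ℚ) < (p : ℚ) * (nat : ℚ) then
    (⌈(nat : ℚ) + ((p : ℚ) - 1) * (lw : ℚ) / (p : ℚ)⌉).toNat
  else p * nat

lemma cld_succ (p m : ℕ) (hp : 0 < p) : cld p (m+1) = m / p + 1 := by
  unfold cld
  have : m + 1 + p - 1 = m + p := by omega
  rw [this, Nat.add_div_right _ hp]

lemma cld_eq (p m : ℕ) (hp : 0 < p) :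
    cld p m = m / p + if p ∣ m then 0 else 1 := by
  unfold cld
  have h1 : m + p - 1 = m + (p - 1) := by omega
  rw [h1, Nat.add_div hp]
  have h2 : (p-1) / p = 0 := Nat.div_eq_of_lt (by omega)
  have h3 : (p-1) % p = p - 1 := Nat.mod_eq_of_lt (by omega)
  have h4 : m % p < p := Nat.mod_lt _ hp
  rw [h2, h3]
  rcases Nat.eq_zero_or_pos (m % p) with h | h
  · rw [if_neg (by omega), if_pos (Nat.dvd_of_mod_eq_zero h)]
  · rw [if_pos (by omega), if_neg (fun hd => by
      have := Nat.mod_eq_zero_of_dvd hd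
      omega)]

lemma cld_le (p m : ℕ) (hp : 0 < p) : cld p m ≤ m := by
  have h := cld_eq p m hp
  have h2 := Nat.div_le_self m p
  rcases Nat.eq_zero_or_pos m with rfl | hm
  · exact Nat.le_of_eq (Nat.div_eq_of_lt (by omega))
  · have h3 : m / p < m ∨ p = 1 := by
      rcases Nat.lt_or_ge p 2 with h4 | h4
      · right; omega
      · left; exact Nat.div_lt_self hm h4
    rcases h3 with h3 | rfl
    · split at h <;> omega
    · simp at h; omega

lemma psi_eq (p e m : ℕ) (hp : 0 < p) (he : 0 < e) :
    psiInv p e m = m - (m - cld p m) % e := by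
  unfold psiInv phiInv
  have h1 := cld_le p m hp
  have h3 := Nat.div_add_mod (m - cld p m) e
  have h4 : (m - cld p m) / e * e = e * ((m - cld p m) / e) := Nat.mul_comm _ _
  omega

/-- If `m ≡ c (mod e)` then the window `[ψ_m, m)` (length `< e`) misses `c`'s class. -/
lemma diam_self (p e c m : ℕ) (hp : 0 < p) (he : 0 < e) (hmc : m % e = c % e) :
    diamInv p e c m = 0 := by
  rw [diamInv, if_neg]
  rintro ⟨j, h1, h2, h3⟩
  rw [psi_eq p e m hp he] at h1
  have hr : (m - cld p m) % e < e := Nat.mod_lt _ he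
  have hjm : j % e = m % e := by rw [h3, hmc]
  have hdvd : e ∣ m - j := (Nat.modEq_iff_dvd' (Nat.le_of_lt h2)).mp hjm
  have := Nat.eq_zero_of_dvd_of_lt hdvd (by omega)
  omega

open Finset in
lemma lemA (p e c : ℕ) (hp : 2 ≤ p) (he : 1 ≤ e) (hed : e ∣ p - 1) (m : ℕ) :
    phiInv p e m + diamInv p e c m =
      ((Finset.range m).filter (fun j => j % e = c % e ∧ ¬ p ∣ j)).card := by
  have hp0 : 0 < p := by omega
  have he0 : 0 < e := he
  induction m with
  | zero =>
      rw [phiInv, diamInv, if_neg (by rintro ⟨j, _, h2, _⟩; omega)]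
      simp [cld]
  | succ m ih =>
      have hcard : ((Finset.range (m+1)).filter
            (fun j => j % e = c % e ∧ ¬ p ∣ j)).card =
          ((Finset.range m).filter (fun j => j % e = c % e ∧ ¬ p ∣ j)).card +
            (if m % e = c % e ∧ ¬ p ∣ m then 1 else 0) := by
        rw [Finset.range_add_one, Finset.filter_insert]
        split
        · rw [Finset.card_insert_of_notMem (by simp)]
        · rw [Nat.add_zero]
      rw [hcard, ← ih]
      have hcle := cld_le p m hp0
      have hcles := cld_le p (m+1) hp0
      have hpsi := psi_eq p e m hp0 he0
      have hpsis := psi_eq p e (m+1) hp0 he0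
      have hqs : cld p (m+1) = m / p + 1 := cld_succ p m hp0
      have hdivle := Nat.div_le_self m p
      by_cases hdm : p ∣ m
      · -- p ∣ m : everything frozen
        have hq : cld p m = m / p := by rw [cld_eq p m hp0, if_pos hdm]; omega
        have hFm : m - cld p m = (m / p) * (p - 1) := by
          have h5 : m / p * p = m := Nat.div_mul_cancel hdm
          have h6 : m / p * (p - 1) + m / p * 1 = m / p * p := by
            rw [← Nat.mul_add]; congr 1; omega
          omega
        have heF : e ∣ m - cld p m := hFm ▸ Dvd.dvd.mul_left hed (m / p)
        have hF0 : (m - cld p m) % e = 0 := Nat.mod_eq_zero_of_dvd heF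
        have hFs : m + 1 - cld p (m+1) = m - cld p m := by omega
        have hd1 : diamInv p e c m = 0 := by
          rw [diamInv, if_neg]; rintro ⟨j, h1, h2, _⟩; omega
        have hd2 : diamInv p e c (m+1) = 0 := by
          rw [diamInv, if_neg]; rintro ⟨j, h1, h2, _⟩
          rw [hpsis, hFs] at h1; omega
        rw [hd1, hd2, if_neg (by tauto), phiInv, phiInv, hFs]
      · -- p ∤ m
        have hq : cld p m = m / p + 1 := by rw [cld_eq p m hp0, if_neg hdm]
        have hFs : m + 1 - cld p (m+1) = (m - cld p m) + 1 := by omega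
        set F := m - cld p m with hF
        have hrlt : F % e < e := Nat.mod_lt _ he0
        have hFdm := Nat.div_add_mod F e
        rcases Nat.lt_or_ge (F % e + 1) e with hre | hre
        · -- r + 1 < e
          have hphi : phiInv p e (m+1) = phiInv p e m := by
            rw [phiInv, phiInv, hFs, ← hF]
            rw [show F + 1 = e * (F / e) + (F % e + 1) by omega,
              Nat.mul_add_div he0, Nat.div_eq_of_lt hre, Nat.add_zero]
          have hmods : (F + 1) % e = F % e + 1 := by
            rw [show F + 1 = e * (F / e) + (F % e + 1) by omega,
              Nat.mul_add_mod, Nat.mod_eq_of_lt hre]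
          have hpsis2 : psiInv p e (m+1) = m - F % e := by
            rw [hpsis, hFs, hmods]; omega
          by_cases hmc : m % e = c % e
          · have hd1 : diamInv p e c m = 0 := diam_self p e c m hp0 he0 hmc
            have hd2 : diamInv p e c (m+1) = 1 := by
              rw [diamInv, if_pos ⟨m, by rw [hpsis2]; omega, by omega, hmc⟩]
            rw [hd1, hd2, if_pos ⟨hmc, hdm⟩, hphi]
          · have hiff : (∃ j, psiInv p e (m+1) ≤ j ∧ j < m+1 ∧ j % e = c % e) ↔
                (∃ j, psiInv p e m ≤ j ∧ j < m ∧ j % e = c % e) := by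
              constructor
              · rintro ⟨j, h1, h2, h3⟩
                refine ⟨j, by rw [hpsi]; rw [hpsis2] at h1; omega, ?_, h3⟩
                rcases Nat.lt_or_ge j m with h | h
                · exact h
                · exact absurd ((show j = m by omega) ▸ h3) hmc
              · rintro ⟨j, h1, h2, h3⟩
                exact ⟨j, by rw [hpsis2]; rw [hpsi] at h1; omega, by omega, h3⟩
            have hdd : diamInv p e c (m+1) = diamInv p e c m := by
              classical
              rw [diamInv, diamInv]
              exact if_congr hiff rfl rfl
            rw [hdd, hphi, if_neg (by tauto), Nat.add_zero]
        · -- r + 1 = e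
          have hre' : F % e = e - 1 := by omega
          have hphi : phiInv p e (m+1) = F / e + 1 := by
            rw [phiInv, hFs,
              show F + 1 = e * (F / e) + e by omega,
              Nat.mul_add_div he0, Nat.div_self he0]
          have hmods : (F + 1) % e = 0 := by
            rw [show F + 1 = e * (F / e) + e by omega, Nat.mul_add_mod, Nat.mod_self]
          have hpsis2 : psiInv p e (m+1) = m + 1 := by
            rw [hpsis, hFs, hmods]; omega
          have hd2 : diamInv p e c (m+1) = 0 := by
            rw [diamInv, if_neg]; rintro ⟨j, h1, h2, _⟩; rw [hpsis2] at h1; omega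
          have hphim : phiInv p e m = F / e := rfl
          by_cases hmc : m % e = c % e
          · have hd1 : diamInv p e c m = 0 := diam_self p e c m hp0 he0 hmc
            rw [hd1, hd2, hphi, hphim, if_pos ⟨hmc, hdm⟩]
          · have hce : c % e < e := Nat.mod_lt c he0
            have hme : m % e < e := Nat.mod_lt m he0
            set s := (m % e + e - c % e) % e with hs
            have hse : s < e := Nat.mod_lt _ he0
            have hs1 : 1 ≤ s := by
              rcases Nat.eq_zero_or_pos s with h0 | h0
              · exfalso
                obtain ⟨k, hk⟩ := Nat.dvd_of_mod_eq_zero (hs ▸ h0 : (m % e + e - c % e) % e = 0)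
                rcases k with _ | _ | k
                · omega
                · omega
                · have h2e : e * (k + 1 + 1) = e * k + e + e := by ring
                  omega
              · exact h0
            have hsm : s ≤ m := by
              have h1 : F % e ≤ F := Nat.mod_le F e
              omega
            have h8 : (c % e + s) % e = m % e := by
              rw [hs, Nat.add_mod_mod,
                show c % e + (m % e + e - c % e) = m % e + e by omega,
                Nat.add_mod_right, Nat.mod_mod_of_dvd _ (dvd_refl e)]
            have h10 : (m - s) + s = m := Nat.sub_add_cancel hsm
            have h11 : (c + s) % e = ((m - s) + s) % e := by
              rw [h10, ← Nat.mod_add_mod, h8]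
            have h12 : (m - s) % e = c % e := (Nat.ModEq.add_right_cancel' s h11).symm
            have hd1 : diamInv p e c m = 1 := by
              rw [diamInv, if_pos ⟨m - s, by rw [hpsi]; omega, by omega, h12⟩]
            rw [hd1, hd2, hphi, hphim, if_neg (by tauto)]

open Finset in
lemma cnt_mono (p e c a b : ℕ) (h : a ≤ b) :
    ((range a).filter (fun j => j % e = c % e ∧ ¬ p ∣ j)).card ≤
      ((range b).filter (fun j => j % e = c % e ∧ ¬ p ∣ j)).card :=
  Finset.card_le_card (Finset.filter_subset_filter _ (Finset.range_subset_range.2 h))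

open Finset in
lemma cnt_jump (p e c a b j : ℕ) (h1 : a ≤ j) (h2 : j < b)
    (h3 : j % e = c % e) (h4 : ¬ p ∣ j) :
    ((range a).filter (fun j => j % e = c % e ∧ ¬ p ∣ j)).card <
      ((range b).filter (fun j => j % e = c % e ∧ ¬ p ∣ j)).card := by
  apply Finset.card_lt_card
  constructor
  · exact Finset.filter_subset_filter _ (Finset.range_subset_range.2 (by omega))
  · intro hsub
    have hjb : j ∈ (range b).filter (fun j => j % e = c % e ∧ ¬ p ∣ j) := by
      simp [Finset.mem_filter, Finset.mem_range]; exact ⟨h2, h3, h4⟩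
    have := hsub hjb
    simp [Finset.mem_filter, Finset.mem_range] at this
    omega

section eval
variable (p e c nv : ℕ)

lemma pc_mod (he : 0 < e) (hpe : p % e = 1 % e) : (p * c) % e = c % e := by
  have h1 : p ≡ 1 [MOD e] := hpe
  have h2 : p * c ≡ 1 * c [MOD e] := Nat.ModEq.mul_right c h1
  rw [Nat.one_mul] at h2
  exact h2

lemma eval_sharp (hp : 2 ≤ p) (he : 1 ≤ e) (hep : e < p) (hc : 1 ≤ c)
    (hpe : p % e = 1 % e) (hnv : (p - 1) * c = e * nv) :
    phiInv p e (p * c + e) + diamInv p e c (p * c + e) = nv := by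
  have hp0 : 0 < p := by omega
  have hcld : cld p (p * c + e) = c + 1 := by
    unfold cld
    have h1 : p * (c + 1) = p * c + p := by ring
    rw [show p * c + e + p - 1 = p * (c + 1) + (e - 1) by omega,
      Nat.mul_add_div hp0, Nat.div_eq_of_lt (by omega)]
  have hcp : c ≤ p * c := Nat.le_mul_of_pos_left c hp0
  have hFval : p * c + e - cld p (p * c + e) = e * nv + (e - 1) := by
    rw [hcld]
    have h2 : (p - 1) * c + c = p * c := by
      rw [Nat.sub_one_mul]; omega
    omega
  have hphi : phiInv p e (p * c + e) = nv := by
    rw [phiInv, hFval, Nat.mul_add_div he, Nat.div_eq_of_lt (by omega), Nat.add_zero]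
  have hmod : (p * c + e) % e = c % e := by
    rw [Nat.add_mod_right, pc_mod p e c he hpe]
  rw [hphi, diam_self p e c _ hp0 he hmod]
  omega


lemma eval_flat (hp : 2 ≤ p) (he : 1 ≤ e) (hep : e < p) (hc : 1 ≤ c)
    (hpe : p % e = 1 % e) (hnv : (p - 1) * c = e * nv) :
    phiInv p e (p * c + 1 - e) + diamInv p e c (p * c + 1 - e) = nv := by
  have hp0 : 0 < p := by omega
  have hcp : c ≤ p * c := Nat.le_mul_of_pos_left c hp0
  have hpc : p ≤ p * c := Nat.le_mul_of_pos_right p hc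
  have hnv1 : 1 ≤ nv := by
    rcases Nat.eq_zero_or_pos nv with h | h
    · exfalso; rw [h, Nat.mul_zero] at hnv
      have := Nat.mul_pos (show 0 < p - 1 by omega) hc
      omega
    · exact h
  have hcld : cld p (p * c + 1 - e) = c := by
    unfold cld
    rw [show p * c + 1 - e + p - 1 = p * c + (p - e) by omega,
      Nat.mul_add_div hp0, Nat.div_eq_of_lt (by omega), Nat.add_zero]
  have h2 : (p - 1) * c + c = p * c := by rw [Nat.sub_one_mul]; omega
  have henv : e ≤ e * nv := Nat.le_mul_of_pos_right e hnv1
  have hFval : p * c + 1 - e - cld p (p * c + 1 - e) = e * (nv - 1) + 1 := by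
    rw [hcld]
    have h3 : e * (nv - 1) + e = e * nv := by rw [Nat.mul_sub_one]; omega
    omega
  rcases Nat.lt_or_ge e 2 with he1 | he2
  · -- e = 1
    have he1' : e = 1 := by omega
    have hphi : phiInv p e (p * c + 1 - e) = nv := by
      rw [phiInv, hFval, he1']
      omega
    have hdiam : diamInv p e c (p * c + 1 - e) = 0 := by
      apply diam_self p e c _ hp0 he
      rw [he1']
      simp [Nat.mod_one]
    rw [hphi, hdiam]
    omega
  · -- e ≥ 2
    have hphi : phiInv p e (p * c + 1 - e) = nv - 1 := by
      rw [phiInv, hFval, Nat.mul_add_div he, Nat.div_eq_of_lt (by omega), Nat.add_zero]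
    have hFmod : (p * c + 1 - e - cld p (p * c + 1 - e)) % e = 1 := by
      rw [hFval, Nat.mul_add_mod, Nat.mod_eq_of_lt (by omega)]
    have hpsi : psiInv p e (p * c + 1 - e) = p * c - e := by
      rw [psi_eq p e _ hp0 he, hFmod]; omega
    have hjmod : (p * c - e) % e = c % e := by
      have h4 : (p * c - e) + e = p * c := by omega
      have h5 : ((p * c - e) + e) % e = (p * c - e) % e := Nat.add_mod_right _ _
      rw [h4] at h5
      rw [← h5, pc_mod p e c he hpe]
    have hdiam : diamInv p e c (p * c + 1 - e) = 1 := by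
      rw [diamInv, if_pos ⟨p * c - e, by rw [hpsi], by omega, hjmod⟩]
    rw [hphi, hdiam]
    omega

end eval

section qlem
variable (p e c lw : ℕ)

lemma sharp_one (hp : 2 ≤ p) (he : 1 ≤ e) (hep : e < p) (hc : 1 ≤ c) :
    sharpInv p e (p * c) = p * c + e := by
  have hpq : (2:ℚ) ≤ (p:ℚ) := by exact_mod_cast hp
  have hp0q : (0:ℚ) < (p:ℚ) := by linarith
  have heq : (1:ℚ) ≤ (e:ℚ) := by exact_mod_cast he
  have hepq : (e:ℚ) < (p:ℚ) := by exact_mod_cast hep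
  have hcq : (1:ℚ) ≤ (c:ℚ) := by exact_mod_cast hc
  have hA : (p:ℚ) ≤ (p:ℚ) * c := by nlinarith
  have hB : (p:ℚ) * p ≤ (p:ℚ) * ((p:ℚ) * c) := by nlinarith
  rw [sharpInv, if_pos (by push_cast; nlinarith [hA, hB])]
  have h1 : ((p:ℚ) - 1) * e / p ≤ e := by
    rw [div_le_iff₀ hp0q]; nlinarith
  have h2 : (e:ℚ) - 1 < ((p:ℚ) - 1) * e / p := by
    rw [lt_div_iff₀ hp0q]; nlinarith
  have h3 : ⌈((p:ℚ) * c) + ((p:ℚ) - 1) * e / p⌉ = ((p * c + e : ℕ) : ℤ) := by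
    rw [Int.ceil_eq_iff]
    constructor
    · push_cast; linarith
    · push_cast; linarith
  have h4 : (((p:ℕ) * c : ℕ) : ℚ) = (p:ℚ) * c := by push_cast; ring
  rw [h4, h3, Int.toNat_natCast]

lemma flat_one (hp : 2 ≤ p) (he : 1 ≤ e) (hep : e < p) (hc : 1 ≤ c) :
    flatInv p e (p * c) = p * c + 1 - e := by
  have hpq : (2:ℚ) ≤ (p:ℚ) := by exact_mod_cast hp
  have hp0q : (0:ℚ) < (p:ℚ) := by linarith
  have hp1q : (0:ℚ) < (p:ℚ) - 1 := by linarith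
  have heq : (1:ℚ) ≤ (e:ℚ) := by exact_mod_cast he
  have hepq : (e:ℚ) < (p:ℚ) := by exact_mod_cast hep
  have hcq : (1:ℚ) ≤ (c:ℚ) := by exact_mod_cast hc
  have hepc : e ≤ p * c := by
    have := Nat.le_mul_of_pos_right p hc; omega
  have heq2 : (e:ℚ) ≤ (p:ℚ) - 1 := by
    have h0 : ((e + 1 : ℕ) : ℚ) ≤ ((p : ℕ) : ℚ) := by exact_mod_cast hep
    push_cast at h0; linarith
  have hA : (p:ℚ) ≤ (p:ℚ) * c := by nlinarith
  have hB : (p:ℚ) * p ≤ (p:ℚ) * ((p:ℚ) * c) := by nlinarith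
  rw [flatInv, if_pos (by
    rw [lt_div_iff₀ hp1q]; push_cast; nlinarith [hA, hB, heq2,
      mul_le_mul_of_nonneg_right heq2 (le_of_lt hp1q)])]
  have h1 : ((p:ℚ) - 1) * e / p < e := by
    rw [div_lt_iff₀ hp0q]; nlinarith
  have h2 : (e:ℚ) - 1 ≤ ((p:ℚ) - 1) * e / p := by
    rw [le_div_iff₀ hp0q]; nlinarith
  have hn : ((p * c + 1 - e : ℕ) : ℚ) = (p:ℚ) * c + 1 - e := by
    push_cast [Nat.cast_sub (show e ≤ p * c + 1 by omega)]; ring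
  have h3 : ⌈((p:ℚ) * c) - ((p:ℚ) - 1) * e / p⌉ = ((p * c + 1 - e : ℕ) : ℤ) := by
    rw [Int.ceil_eq_iff]
    have : (((p * c + 1 - e : ℕ) : ℤ) : ℚ) = (p:ℚ) * c + 1 - e := by
      push_cast [Nat.cast_sub (show e ≤ p * c + 1 by omega)]; ring
    rw [this]
    constructor
    · linarith
    · linarith
  have h4 : (((p:ℕ) * c : ℕ) : ℚ) = (p:ℚ) * c := by push_cast; ring
  rw [h4, h3, Int.toNat_natCast]

lemma flat_le (hp : 2 ≤ p) (he : 1 ≤ e) (hc : 1 ≤ c) (hlw : e ≤ lw) :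
    flatInv p lw (p * c) ≤ p * c := by
  have hpq : (2:ℚ) ≤ (p:ℚ) := by exact_mod_cast hp
  have hp0q : (0:ℚ) < (p:ℚ) := by linarith
  have hlwq : (0:ℚ) ≤ (lw:ℚ) := by positivity
  have hpc1 : 1 ≤ p * c := by
    have := Nat.le_mul_of_pos_right p hc; omega
  rw [flatInv]
  split
  · rw [Int.toNat_le]
    apply Int.ceil_le.2
    have h1 : (0:ℚ) ≤ ((p:ℚ) - 1) * lw / p :=
      div_nonneg (by nlinarith) (by linarith)
    push_cast
    linarith
  · omega

lemma sharp_gt (hp : 2 ≤ p) (he : 1 ≤ e) (hep : e < p) (hc : 1 ≤ c)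
    (hkey : p * e < (p - 1) * lw) :
    p * c + e < sharpInv p lw (p * c) := by
  have hpq : (2:ℚ) ≤ (p:ℚ) := by exact_mod_cast hp
  have hp0q : (0:ℚ) < (p:ℚ) := by linarith
  have hkeyq : (p:ℚ) * e < ((p:ℚ) - 1) * lw := by
    have h0 : ((p * e : ℕ) : ℚ) < (((p-1) * lw : ℕ) : ℚ) := by exact_mod_cast hkey
    push_cast [Nat.cast_sub (show 1 ≤ p by omega)] at h0
    linarith
  rw [sharpInv]
  split
  · have h6 : (e:ℚ) < ((p:ℚ) - 1) * lw / p := by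
      rw [lt_div_iff₀ hp0q]; linarith [hkeyq]
    have h5 : ((p * c + e : ℕ) : ℤ) < ⌈((p:ℚ) * c : ℚ) + ((p:ℚ) - 1) * lw / p⌉ := by
      apply Int.lt_ceil.2
      push_cast
      linarith
    have h4 : (((p:ℕ) * c : ℕ) : ℚ) = (p:ℚ) * c := by push_cast; ring
    rw [h4]
    exact Int.lt_toNat.2 h5
  · have h1 : 2 * (p * c) ≤ p * (p * c) := Nat.mul_le_mul_right _ hp
    have h2 : p ≤ p * c := Nat.le_mul_of_pos_right p hc
    omega

end qlem

/-- With the invariants as above (`n_w = e·n_v`, `♮ = p·n_w/(p-1)`,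
`c = n_w/(p-1)`, `λ_w = e·λ_v`, `p ∤ λ_w`), the integer
`b̄ = φ_♯ + ◇_♯ - φ_♭ - ◇_♭` vanishes if and only if `λ_v = 1`; moreover if `λ_v = 1`
then `φ_♯ + ◇_♯ = φ_♭ + ◇_♭ = n_v`. -/
theorem stmt11 (p e nv lv : ℕ) (hp : p.Prime) (he : 1 ≤ e) (hnv : 1 ≤ nv)
    (hed : e ∣ p - 1) (hdvd : (p - 1) ∣ e * nv) (hlv : 1 ≤ lv)
    (hplw : ¬ p ∣ e * lv) :
    (((phiInv p e (sharpInv p (e * lv) (p * (e * nv) / (p - 1))) : ℤ) +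
        diamInv p e ((e * nv) / (p - 1)) (sharpInv p (e * lv) (p * (e * nv) / (p - 1))) -
        phiInv p e (flatInv p (e * lv) (p * (e * nv) / (p - 1))) -
        diamInv p e ((e * nv) / (p - 1)) (flatInv p (e * lv) (p * (e * nv) / (p - 1))))
          = 0 ↔ lv = 1) ∧
    (lv = 1 →
      phiInv p e (sharpInv p (e * lv) (p * (e * nv) / (p - 1))) +
        diamInv p e ((e * nv) / (p - 1)) (sharpInv p (e * lv) (p * (e * nv) / (p - 1)))
          = nv ∧
      phiInv p e (flatInv p (e * lv) (p * (e * nv) / (p - 1))) +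
        diamInv p e ((e * nv) / (p - 1)) (flatInv p (e * lv) (p * (e * nv) / (p - 1)))
          = nv) := by
  have hp2 : 2 ≤ p := hp.two_le
  have hep : e < p := by have := Nat.le_of_dvd (by omega) hed; omega
  set c := e * nv / (p - 1) with hcdef
  have hc : (p - 1) * c = e * nv := Nat.mul_div_cancel' hdvd
  have hc1 : 1 ≤ c := by
    rcases Nat.eq_zero_or_pos c with h0 | h0
    · exfalso; rw [h0, Nat.mul_zero] at hc
      have := Nat.mul_pos he hnv; omega
    · exact h0
  have hnat : p * (e * nv) / (p - 1) = p * c := by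
    rw [← hc, show p * ((p - 1) * c) = (p - 1) * (p * c) by ring,
      Nat.mul_div_cancel_left _ (by omega : 0 < p - 1)]
  have hpe : p % e = 1 % e := by
    obtain ⟨d, hd⟩ := hed
    rw [show p = e * d + 1 by omega, Nat.mul_add_mod]
  rw [hnat]
  constructor
  · constructor
    · intro h0
      by_contra hlv1
      have hlv2 : 2 ≤ lv := by omega
      have hkey : p * e < (p - 1) * (e * lv) := by
        rcases Nat.lt_or_ge p 3 with h3 | h3
        · have hpp : p = 2 := by omega
          have he1 : e = 1 := by omega
          have h2lv : ¬ 2 ∣ lv := by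
            rw [hpp, he1] at hplw; simpa using hplw
          rw [hpp, he1]
          omega
        · obtain ⟨P, hP⟩ : ∃ P, p = P + 2 := ⟨p - 2, by omega⟩
          have h1 : (p - 1) * (e * 2) ≤ (p - 1) * (e * lv) :=
            Nat.mul_le_mul_left _ (Nat.mul_le_mul_left _ hlv2)
          have h2 : p * e < (p - 1) * (e * 2) := by
            rw [hP, show P + 2 - 1 = P + 1 from by omega]
            nlinarith [Nat.mul_pos (show 0 < P by omega) (show 0 < e by omega)]
          omega
      have hSgt := sharp_gt p e c (e * lv) hp2 he hep hc1 hkey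
      have hFle := flat_le p e c (e * lv) hp2 he hc1 (Nat.le_mul_of_pos_right e hlv)
      have hjm : (p * c + e) % e = c % e := by
        rw [Nat.add_mod_right]; exact pc_mod p e c he hpe
      have hjd : ¬ p ∣ (p * c + e) := by
        intro h
        have h2 : p ∣ e := (Nat.dvd_add_right (dvd_mul_right p c)).mp h
        have := Nat.le_of_dvd he h2; omega
      have hstrict := cnt_jump p e c (flatInv p (e * lv) (p * c))
        (sharpInv p (e * lv) (p * c)) (p * c + e) (by omega) hSgt hjm hjd
      have hA1 := lemA p e c hp2 he hed (sharpInv p (e * lv) (p * c))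
      have hA2 := lemA p e c hp2 he hed (flatInv p (e * lv) (p * c))
      omega
    · intro h1
      subst h1
      rw [mul_one, sharp_one p e c hp2 he hep hc1, flat_one p e c hp2 he hep hc1]
      have v1 := eval_sharp p e c nv hp2 he hep hc1 hpe hc
      have v2 := eval_flat p e c nv hp2 he hep hc1 hpe hc
      omega
  · intro h1
    subst h1
    rw [mul_one, sharp_one p e c hp2 he hep hc1, flat_one p e c hp2 he hep hc1]
    exact ⟨eval_sharp p e c nv hp2 he hep hc1 hpe hc,
      eval_flat p e c nv hp2 he hep hc1 hpe hc⟩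
end

section
/- Fix a prime p, an integer e ≥ 1 dividing p − 1, and an integer n_v ≥ 1 such that p − 1 divides e·n_v. Set n_w := e·n_v, ♮ := p·n_w/(p−1), and c := n_w/(p−1). For an integer m ≥ 1 define φ_m := ⌊(m − ⌈m/p⌉)/e⌋, ψ_m := ⌈m/p⌉ + φ_m·e, and ◇_m := 1 if some integer in the half-open interval [ψ_m, m) is congruent to c modulo e, and ◇_m := 0 otherwise. Let λ_w be a positive integer with p ∤ λ_w and λ_w ≥ p♮; define ♭ := ⌈♮ − (p−1)λ_w/p⌉ if λ_w < p(♮−1)/(p−1) and ♭ := 1 otherwise, and ♯ := ⌈♮ + (p−1)λ_w/p⌉ if λ_w < p♮ and ♯ := p♮ otherwise. Then b̄ := φ_♯ + ◇_♯ − φ_♭ − ◇_♭ equals p·n_v. -/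
/-- With the invariants as above (`n_w = e·n_v`, `♮ = p·n_w/(p-1)`,
`c = n_w/(p-1)`), if `λ_w` is a positive integer with `p ∤ λ_w` and `λ_w ≥ p♮`, then
`b̄ = φ_♯ + ◇_♯ - φ_♭ - ◇_♭` equals `p·n_v`. -/
theorem stmt12 (p e nv lw : ℕ) (hp : p.Prime) (he : 1 ≤ e) (hnv : 1 ≤ nv)
    (hed : e ∣ p - 1) (hdvd : (p - 1) ∣ e * nv) (hlw : 1 ≤ lw)
    (hplw : ¬ p ∣ lw) (hbig : p * (p * (e * nv) / (p - 1)) ≤ lw) :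
    ((phiInv p e (sharpInv p lw (p * (e * nv) / (p - 1))) : ℤ) +
        diamInv p e ((e * nv) / (p - 1)) (sharpInv p lw (p * (e * nv) / (p - 1))) -
        phiInv p e (flatInv p lw (p * (e * nv) / (p - 1))) -
        diamInv p e ((e * nv) / (p - 1)) (flatInv p lw (p * (e * nv) / (p - 1))))
      = (p : ℤ) * (nv : ℤ) := by
  have hp2 : 2 ≤ p := hp.two_le
  set N := e * nv with hN
  set nt := p * N / (p - 1) with hnt
  have hDd : (p - 1) ∣ p * N := Dvd.dvd.mul_left hdvd p
  have hmul : nt * (p - 1) = p * N := Nat.div_mul_cancel hDd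
  -- sharp = p * nt
  have hsharp : sharpInv p lw nt = p * nt := by
    rw [sharpInv, if_neg]
    push_neg
    exact_mod_cast hbig
  -- flat = 1
  have hflat : flatInv p lw nt = 1 := by
    rw [flatInv, if_neg]
    push_neg
    have h1 : (p : ℚ) * nt ≤ lw := by exact_mod_cast hbig
    have hpq : (2 : ℚ) ≤ p := by exact_mod_cast hp2
    have hlwq : (1 : ℚ) ≤ lw := by exact_mod_cast hlw
    have hntq : (0 : ℚ) ≤ nt := by positivity
    rw [div_le_iff₀ (by linarith)]
    nlinarith
  -- values at m = 1
  have hcld1 : cld p 1 = 1 := by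
    unfold cld
    have h : 1 + p - 1 = p := by omega
    rw [h, Nat.div_self (by omega)]
  have hphi1 : phiInv p e 1 = 0 := by
    unfold phiInv; rw [hcld1]; simp
  have hpsi1 : psiInv p e 1 = 1 := by
    unfold psiInv; rw [hcld1, hphi1]; simp
  have hdiam1 : diamInv p e (N / (p - 1)) 1 = 0 := by
    have h : ¬ ∃ j : ℕ, psiInv p e 1 ≤ j ∧ j < 1 ∧ j % e = (N / (p - 1)) % e := by
      rintro ⟨j, hj1, hj2, -⟩
      rw [hpsi1] at hj1
      omega
    unfold diamInv; rw [if_neg h]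
  -- values at m = p * nt
  have hcldm : cld p (p * nt) = nt := by
    unfold cld
    have h1 : p * nt + p - 1 = (p - 1) + p * nt := by omega
    rw [h1, Nat.add_mul_div_left _ _ (by omega : 0 < p), Nat.div_eq_of_lt (by omega)]
    simp
  have hsplit : p * nt = nt * (p - 1) + nt := by
    have h : p - 1 + 1 = p := by omega
    calc p * nt = nt * ((p - 1) + 1) := by rw [h]; ring
    _ = nt * (p - 1) + nt := by ring
  have h2 : p * nt - nt = p * N := by
    rw [hsplit, Nat.add_sub_cancel, hmul]
  have hphim : phiInv p e (p * nt) = p * nv := by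
    unfold phiInv
    rw [hcldm, h2]
    have h : p * N = (p * nv) * e := by rw [hN]; ring
    rw [h, Nat.mul_div_cancel _ (by omega : 0 < e)]
  have hpsim : psiInv p e (p * nt) = p * nt := by
    unfold psiInv
    rw [hcldm, hphim]
    have h : p * nv * e = p * N := by rw [hN]; ring
    rw [h, ← h2, Nat.add_sub_cancel' (by rw [hsplit]; omega)]
  have hdiamm : diamInv p e (N / (p - 1)) (p * nt) = 0 := by
    have h : ¬ ∃ j : ℕ, psiInv p e (p * nt) ≤ j ∧ j < p * nt ∧ j % e = (N / (p - 1)) % e := by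
      rintro ⟨j, hj1, hj2, -⟩
      rw [hpsim] at hj1
      omega
    unfold diamInv; rw [if_neg h]
  rw [hsharp, hflat, hphim, hdiamm, hphi1, hdiam1]
  push_cast
  ring
end

section
/- Let p be a prime, d ≥ 1 an integer, and Λ := ℤ_p[[X_1, …, X_d]] the ring of formal power series in d variables over the ring ℤ_p of p-adic integers. For n ≥ 0 let I_n ⊆ Λ be the ideal generated by the elements (1 + X_i)^{p^n} − 1 for i = 1, …, d. Let f ∈ Λ with f ∉ pΛ, let r ≥ 1, and let N be a Λ-module admitting a surjective Λ-module homomorphism (Λ/(f))^r → N. Then for every integer ν ≥ 1 there exists a constant C ≥ 0 such that for all n ≥ 0 the quotient module N/(p^ν N + I_n N) is finite of cardinality at most p^{C·p^{n(d−1)}}. -/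
/-!
Reduce modulo `p`. For a monomial order, let `a` be the least exponent at which the coefficient
of `f` is a unit. Multiplying `f` by `X^(e - a)` expresses `X^e`, modulo `(p, f)`, through
monomials larger than `e`; by downward induction over the box `[0, q)^d`, the ring
`Λ/(p, f, X_1^q, …, X_d^q)` is spanned over `ℤ_p` by the monomials `X^e` with `e` in the box and
`a ≰ e`, of which there are at most `|a| q^(d-1)`. As `X_i^(p^n) ∈ (p, (1 + X_i)^(p^n) - 1)`, the
same monomials span `Λ/(p, f, I_n)`, hence, by successive `p`-adic approximation,
`Λ/(p^ν, f, I_n)`, which therefore has at most `p^(ν |a| p^(n(d-1)))` elements. Finally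
`N/(p^ν N + I_n N)` is a quotient of `(Λ/(f, p^ν, I_n))^r`.
-/

open MvPowerSeries
open scoped Finset

section Counting

variable {R M : Type*} [CommRing R] [AddCommGroup M] [Module R M]

theorem exists_surjective_of_span_range_eq_top {ι : Type*} [Fintype ι] (I : Ideal R)
    (hI : ∀ t ∈ I, ∀ x : M, t • x = 0) {v : ι → M} (hv : Submodule.span R (Set.range v) = ⊤) :
    ∃ ψ : (ι → R ⧸ I) → M, Function.Surjective ψ := by
  refine ⟨fun c => ∑ i, Quotient.out (c i) • v i, fun x => ?_⟩
  have hx : x ∈ Submodule.span R (Set.range v) := hv ▸ Submodule.mem_top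
  obtain ⟨a, rfl⟩ := (Submodule.mem_span_range_iff_exists_fun R).1 hx
  refine ⟨fun i => Ideal.Quotient.mk I (a i), Finset.sum_congr rfl fun i _ => ?_⟩
  have hout : Quotient.out (Ideal.Quotient.mk I (a i)) - a i ∈ I :=
    Ideal.Quotient.eq.1 (Ideal.Quotient.mk_out _)
  rw [← sub_eq_zero, ← sub_smul, hI _ hout]

theorem finite_and_card_le_of_span_range_eq_top {ι : Type*} [Fintype ι] (I : Ideal R)
    [Finite (R ⧸ I)] (hI : ∀ t ∈ I, ∀ x : M, t • x = 0) {v : ι → M}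
    (hv : Submodule.span R (Set.range v) = ⊤) :
    Finite M ∧ Nat.card M ≤ Nat.card (R ⧸ I) ^ Fintype.card ι := by
  obtain ⟨ψ, hψ⟩ := exists_surjective_of_span_range_eq_top I hI hv
  refine ⟨Finite.of_surjective ψ hψ, ?_⟩
  simpa [Nat.card_fun] using Nat.card_le_card_of_surjective ψ hψ

theorem finite_and_card_quotient_smul_top_le {r : ℕ} {I : Ideal R}
    (g : (Fin r → R ⧸ I) →ₗ[R] M) (hg : Function.Surjective g) (J : Ideal R)
    [Finite (R ⧸ (I ⊔ J))] :
    Finite (M ⧸ J • (⊤ : Submodule R M)) ∧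
      Nat.card (M ⧸ J • (⊤ : Submodule R M)) ≤ Nat.card (R ⧸ (I ⊔ J)) ^ r := by
  set φ := (J • (⊤ : Submodule R M)).mkQ ∘ₗ g
  have hφ : Function.Surjective φ := (Submodule.mkQ_surjective _).comp hg
  have hspan : Submodule.span R (Set.range fun i => φ (Pi.single i 1)) = ⊤ := by
    have hbasis : Submodule.span R (Set.range fun i : Fin r => (Pi.single i 1 : Fin r → R ⧸ I))
        = ⊤ := by
      have := (Pi.basisFun (R ⧸ I) (Fin r)).span_eq
      rw [show ⇑(Pi.basisFun (R ⧸ I) (Fin r)) = fun i => Pi.single i 1 from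
        funext (Pi.basisFun_apply _ _)] at this
      rw [← Submodule.restrictScalars_span R (R ⧸ I) Ideal.Quotient.mk_surjective, this,
        Submodule.restrictScalars_top]
    rw [Set.range_comp' φ, ← Submodule.map_span, hbasis, Submodule.map_top,
      LinearMap.range_eq_top.2 hφ]
  have hann : ∀ t ∈ I ⊔ J, ∀ x : M ⧸ J • (⊤ : Submodule R M), t • x = 0 := by
    intro t ht x
    obtain ⟨y, rfl⟩ := hφ x
    obtain ⟨u, hu, w, hw, rfl⟩ := Submodule.mem_sup.1 ht
    have hu0 : u • y = 0 := funext fun i => by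
      obtain ⟨z, hz⟩ := Ideal.Quotient.mk_surjective (y i)
      rw [Pi.smul_apply, ← hz]
      simpa [Algebra.smul_def] using Ideal.Quotient.eq_zero_iff_mem.2 (I.mul_mem_right z hu)
    rw [add_smul, ← map_smul, hu0, map_zero, zero_add, LinearMap.comp_apply, ← map_smul,
      Submodule.mkQ_apply, Submodule.Quotient.mk_eq_zero]
    exact Submodule.smul_mem_smul hw Submodule.mem_top
  simpa using finite_and_card_le_of_span_range_eq_top (I ⊔ J) hann hspan

end Counting

theorem Submodule.sup_span_pow_restrictScalars_eq_top {R A : Type*} [CommRing R] [CommRing A]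
    [Algebra R A] {M : Submodule R A} {K : Ideal A} {t : R}
    (h : M ⊔ (K ⊔ Ideal.span {algebraMap R A t}).restrictScalars R = ⊤) (j : ℕ) :
    M ⊔ (K ⊔ Ideal.span {algebraMap R A t ^ j}).restrictScalars R = ⊤ := by
  induction j with
  | zero => simp [Ideal.span_singleton_one]
  | succ j ih =>
    refine eq_top_iff.2 fun x _ => ?_
    obtain ⟨m, hm, k, hk, rfl⟩ := Submodule.mem_sup.1 (ih ▸ Submodule.mem_top (x := x))
    obtain ⟨k₀, hk₀, _, hy, rfl⟩ := Submodule.mem_sup.1 hk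
    obtain ⟨y, rfl⟩ := Ideal.mem_span_singleton'.1 hy
    obtain ⟨m', hm', k', hk', rfl⟩ := Submodule.mem_sup.1 (h ▸ Submodule.mem_top (x := y))
    obtain ⟨k₁, hk₁, _, hz, rfl⟩ := Submodule.mem_sup.1 hk'
    obtain ⟨z, rfl⟩ := Ideal.mem_span_singleton'.1 hz
    have hm'' : m + t ^ j • m' ∈ M := M.add_mem hm (M.smul_mem _ hm')
    have hk'' : k₀ + algebraMap R A t ^ j * k₁ + z * algebraMap R A t ^ (j + 1) ∈
        K ⊔ Ideal.span {algebraMap R A t ^ (j + 1)} :=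
      Ideal.add_mem _ (Ideal.mem_sup_left (K.add_mem hk₀ (K.mul_mem_left _ hk₁)))
        (Ideal.mem_sup_right (Ideal.mul_mem_left _ _ (Ideal.mem_span_singleton_self _)))
    convert Submodule.add_mem_sup hm''
      (show _ ∈ (K ⊔ Ideal.span {algebraMap R A t ^ (j + 1)}).restrictScalars R from hk'') using 1
    rw [Algebra.smul_def, map_pow]
    ring

theorem pow_prime_pow_mem_span_sup {A : Type*} [CommRing A] {p : ℕ} (hp : p.Prime) (x : A)
    (n : ℕ) : x ^ p ^ n ∈ Ideal.span {(p : A)} ⊔ Ideal.span {(1 + x) ^ p ^ n - 1} := by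
  obtain ⟨y, hy⟩ := exists_add_pow_prime_pow_eq hp 1 x n
  have hx : x ^ p ^ n = ((1 + x) ^ p ^ n - 1) - p * (1 * x * y) := by rw [hy]; ring
  rw [hx]
  exact Ideal.sub_mem _ (Ideal.mem_sup_right (Ideal.mem_span_singleton_self _))
    (Ideal.mem_sup_left (Ideal.mul_mem_right _ _ (Ideal.mem_span_singleton_self _)))

theorem Submodule.span_image_mk_eq_top {R A : Type*} [CommRing R] [CommRing A] [Algebra R A]
    {K : Ideal A} {s : Set A} (h : Submodule.span R s ⊔ K.restrictScalars R = ⊤) :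
    Submodule.span R (Ideal.Quotient.mk K '' s) = ⊤ := by
  refine eq_top_iff.2 fun x _ => ?_
  obtain ⟨y, rfl⟩ := Ideal.Quotient.mk_surjective x
  obtain ⟨m, hm, k, hk, rfl⟩ := Submodule.mem_sup.1 (h ▸ Submodule.mem_top (x := y))
  rw [map_add, Ideal.Quotient.eq_zero_iff_mem.2 hk, add_zero]
  exact Submodule.apply_mem_span_image_of_mem_span (Ideal.Quotient.mkₐ R K).toLinearMap hm

open Classical in
noncomputable def exponentBox (σ : Type*) [Fintype σ] (q : ℕ) : Finset (σ →₀ ℕ) :=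
  (Fintype.piFinset fun _ : σ => Finset.range q).map
    Finsupp.equivFunOnFinite.symm.toEmbedding

section ExponentBox

variable {σ : Type*} [Fintype σ]

theorem mem_exponentBox {q : ℕ} {e : σ →₀ ℕ} : e ∈ exponentBox σ q ↔ ∀ i, e i < q := by
  simp [exponentBox]

theorem card_filter_not_le_exponentBox (a : σ →₀ ℕ) (q : ℕ) :
    #{e ∈ exponentBox σ q | ¬ a ≤ e} ≤ (∑ i, a i) * q ^ (Fintype.card σ - 1) := by
  classical
  have hslice : ∀ i, #{e ∈ exponentBox σ q | e i < a i} ≤ a i * q ^ (Fintype.card σ - 1) := by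
    intro i
    calc #{e ∈ exponentBox σ q | e i < a i}
        ≤ #((Fintype.piFinset
            (Function.update (fun _ => Finset.range q) i (Finset.range (a i)))).map
              Finsupp.equivFunOnFinite.symm.toEmbedding) := by
          refine Finset.card_le_card fun e he => ?_
          rw [Finset.mem_filter, mem_exponentBox] at he
          refine Finset.mem_map.2 ⟨e, Fintype.mem_piFinset.2 fun j => ?_, by simp⟩
          rcases eq_or_ne j i with rfl | hj
          · simpa using he.2
          · simpa [hj] using he.1 j
      _ = a i * q ^ (Fintype.card σ - 1) := by
          have hcard : ∀ j, #(Function.update (fun _ => Finset.range q) i (Finset.range (a i)) j)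
              = Function.update (fun _ => q) i (a i) j := fun j => by
            rcases eq_or_ne j i with rfl | hj <;> simp [*]
          rw [Finset.card_map, Fintype.card_piFinset, Finset.prod_congr rfl fun j _ => hcard j,
            Finset.prod_update_of_mem (Finset.mem_univ i)]
          simp [Finset.card_sdiff, Finset.prod_const]
  calc #{e ∈ exponentBox σ q | ¬ a ≤ e}
      ≤ #(Finset.univ.biUnion fun i => {e ∈ exponentBox σ q | e i < a i}) := by
        refine Finset.card_le_card fun e he => ?_
        rw [Finset.mem_filter, Finsupp.le_def] at he
        push Not at he
        obtain ⟨i, hi⟩ := he.2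
        exact Finset.mem_biUnion.2 ⟨i, Finset.mem_univ i, Finset.mem_filter.2 ⟨he.1, hi⟩⟩
    _ ≤ ∑ i, #{e ∈ exponentBox σ q | e i < a i} := Finset.card_biUnion_le
    _ ≤ ∑ i, a i * q ^ (Fintype.card σ - 1) := Finset.sum_le_sum fun i _ => hslice i
    _ = (∑ i, a i) * q ^ (Fintype.card σ - 1) := (Finset.sum_mul ..).symm

end ExponentBox

namespace MvPowerSeries

variable {R σ : Type*} [CommRing R]

theorem exists_coeff_notMem_span_of_notMem {c : R} {f : MvPowerSeries σ R}
    (hf : f ∉ Ideal.span {C c}) :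
    ∃ e, coeff e f ∉ Ideal.span {c} := by
  by_contra! h
  choose g hg using fun e => Ideal.mem_span_singleton'.1 (h e)
  refine hf (Ideal.mem_span_singleton'.2 ⟨show MvPowerSeries σ R from g, ext fun e => ?_⟩)
  rw [coeff_mul_C, coeff_apply, hg]

theorem monomial_mem_map_C {P : Ideal R} (e : σ →₀ ℕ) {c : R} (hc : c ∈ P) :
    monomial e c ∈ Ideal.map (C (σ := σ)) P := by
  rw [← mul_one c, ← smul_eq_mul, map_smul, smul_eq_C_mul]
  exact Ideal.mul_mem_right _ _ (Ideal.mem_map_of_mem _ hc)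

variable [Fintype σ] [LinearOrder σ]

theorem coeff_X_pow_mul_eq_ite (g : MvPowerSeries σ R) (q : ℕ) (i : σ) (e : σ →₀ ℕ) :
    coeff e (X i ^ q * show MvPowerSeries σ R from
      fun e' => if ∀ j < i, e' j < q then coeff (e' + Finsupp.single i q) g else 0)
      = if q ≤ e i ∧ ∀ j < i, e j < q then coeff e g else 0 := by
  rw [X_pow_eq, coeff_monomial_mul, ite_and]
  by_cases hqe : Finsupp.single i q ≤ e
  · have hqi : q ≤ e i := by simpa using hqe i
    have hbelow : ∀ j < i, (e - Finsupp.single i q) j = e j := fun j hj => by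
      simp [hj.ne']
    rw [if_pos hqe, if_pos hqi, one_mul, coeff_apply, tsub_add_cancel_of_le hqe]
    exact if_congr (forall₂_congr fun j hj => by rw [hbelow j hj]) rfl rfl
  · rw [if_neg hqe, if_neg (by rwa [Finsupp.single_le_iff] at hqe)]

theorem sub_sum_monomial_coeff_mem_span_X_pow (g : MvPowerSeries σ R) (q : ℕ) :
    g - ∑ e ∈ exponentBox σ q, monomial e (coeff e g) ∈
      Ideal.span (Set.range fun i => (X i : MvPowerSeries σ R) ^ q) := by
  classical
  -- Split off each exponent outside the box at the first coordinate that is `≥ q`.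
  suffices g - ∑ e ∈ exponentBox σ q, monomial e (coeff e g) = ∑ i, X i ^ q * show
      MvPowerSeries σ R from fun e' =>
        if ∀ j < i, e' j < q then coeff (e' + Finsupp.single i q) g else 0 by
    rw [this]
    exact Ideal.sum_mem _ fun i _ => Ideal.mul_mem_right _ _ (Ideal.subset_span ⟨i, rfl⟩)
  ext e
  simp only [map_sub, map_sum, coeff_monomial, coeff_X_pow_mul_eq_ite, Finset.sum_ite_eq,
    mem_exponentBox]
  by_cases hbox : ∀ i, e i < q
  · simp [hbox, fun i => (hbox i).not_ge]
  · obtain ⟨i₀, hi₀, hmin⟩ :=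
      wellFounded_lt.has_min {i | q ≤ e i} ((not_forall.1 hbox).imp fun _ => not_lt.1)
    have hfirst : ∀ j < i₀, e j < q := fun j hj => not_le.1 fun h => hmin j h hj
    rw [if_neg hbox, sub_zero, Finset.sum_eq_single i₀ (fun i _ hi => if_neg ?_) (by simp),
      if_pos ⟨hi₀, hfirst⟩]
    rintro ⟨hqi, hbefore⟩
    exact (hbefore i₀ (lt_of_le_of_ne (not_lt.1 (hmin i hqi)) (Ne.symm hi))).not_ge hi₀

variable {P : Ideal R} {q : ℕ} {T : Submodule R (MvPowerSeries σ R)}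

theorem mem_of_forall_coeff_notMem (hP : (Ideal.map (C (σ := σ)) P).restrictScalars R ≤ T)
    (hX : (Ideal.span (Set.range fun i => (X i : MvPowerSeries σ R) ^ q)).restrictScalars R ≤ T)
    {g : MvPowerSeries σ R}
    (hg : ∀ e ∈ exponentBox σ q, coeff e g ∉ P → monomial e 1 ∈ T) : g ∈ T := by
  rw [← add_sub_cancel (∑ e ∈ exponentBox σ q, monomial e (coeff e g)) g]
  refine T.add_mem (T.sum_mem fun e he => ?_) (hX (sub_sum_monomial_coeff_mem_span_X_pow g q))
  by_cases hc : coeff e g ∈ P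
  · exact hP (monomial_mem_map_C e hc)
  · rw [← mul_one (coeff e g), ← smul_eq_mul, map_smul]
    exact T.smul_mem _ (hg e he hc)

theorem monomial_one_mem_of_forall_lt (m : MonomialOrder σ) {f : MvPowerSeries σ R}
    {a : σ →₀ ℕ} (ha : IsUnit (coeff a f))
    (hmin : ∀ c, coeff c f ∉ P → m.toSyn a ≤ m.toSyn c)
    (hP : (Ideal.map (C (σ := σ)) P).restrictScalars R ≤ T)
    (hf : (Ideal.span {f}).restrictScalars R ≤ T)
    (hX : (Ideal.span (Set.range fun i => (X i : MvPowerSeries σ R) ^ q)).restrictScalars R ≤ T)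
    {e : σ →₀ ℕ} (hae : a ≤ e)
    (ih : ∀ e' ∈ exponentBox σ q, m.toSyn e < m.toSyn e' → monomial e' 1 ∈ T) :
    monomial e 1 ∈ T := by
  classical
  set b := e - a
  have hab : a + b = e := add_tsub_cancel_of_le hae
  have hfb : f * monomial b 1 ∈ T := hf (Ideal.mul_mem_right _ _ (Ideal.mem_span_singleton_self f))
  -- By minimality of `a`, every exponent whose coefficient in `lc • X^e - f X^b` lies outside `P`
  -- is larger than `e`.
  have hrest : monomial e (coeff a f) - f * monomial b 1 ∈ T := by
    refine mem_of_forall_coeff_notMem hP hX fun e' he' hcoeff => ih e' he' ?_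
    rw [map_sub, coeff_mul_monomial, mul_one, coeff_monomial] at hcoeff
    by_cases hbe' : b ≤ e'
    · have he'e : e' ≠ e := by
        rintro rfl
        simp [← hab] at hcoeff
      rw [if_neg he'e, if_pos hbe', zero_sub, neg_mem_iff] at hcoeff
      have hne : e' - b ≠ a := fun h => he'e (by rw [← hab, ← h, tsub_add_cancel_of_le hbe'])
      have hlt : m.toSyn a < m.toSyn (e' - b) :=
        lt_of_le_of_ne (hmin _ hcoeff) (m.toSyn.injective.ne hne.symm)
      rw [← hab, ← tsub_add_cancel_of_le hbe', map_add, map_add]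
      exact add_lt_add_left hlt _
    · rw [if_neg hbe', sub_zero] at hcoeff
      split_ifs at hcoeff with h
      · exact absurd (h ▸ hab ▸ le_add_self) hbe'
      · exact absurd P.zero_mem hcoeff
  have hlead : monomial e (coeff a f) ∈ T := by simpa using T.add_mem hrest hfb
  have hunit := T.smul_mem (ha.unit⁻¹ : Rˣ).val hlead
  rwa [← map_smul, smul_eq_mul, IsUnit.val_inv_mul] at hunit

theorem span_monomial_sup_eq_top (m : MonomialOrder σ) {f : MvPowerSeries σ R}
    {a : σ →₀ ℕ} (ha : IsUnit (coeff a f))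
    (hmin : ∀ c, coeff c f ∉ P → m.toSyn a ≤ m.toSyn c) (q : ℕ) :
    Submodule.span R ((fun e => monomial e (1 : R)) ''
      ↑({e ∈ exponentBox σ q | ¬ a ≤ e} : Finset (σ →₀ ℕ))) ⊔
      (Ideal.map (C (σ := σ)) P ⊔ Ideal.span {f} ⊔
        Ideal.span (Set.range fun i => (X i : MvPowerSeries σ R) ^ q)).restrictScalars R = ⊤ := by
  classical
  set T := Submodule.span R ((fun e => monomial e (1 : R)) ''
      ↑({e ∈ exponentBox σ q | ¬ a ≤ e} : Finset (σ →₀ ℕ))) ⊔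
      (Ideal.map (C (σ := σ)) P ⊔ Ideal.span {f} ⊔
        Ideal.span (Set.range fun i => (X i : MvPowerSeries σ R) ^ q)).restrictScalars R
  have hJ : ∀ {I}, I ≤ Ideal.map (C (σ := σ)) P ⊔ Ideal.span {f} ⊔
      Ideal.span (Set.range fun i => (X i : MvPowerSeries σ R) ^ q) → I.restrictScalars R ≤ T :=
    fun hI => le_sup_of_le_right (Submodule.restrictScalars_mono R hI)
  have hP := hJ (le_sup_of_le_left le_sup_left)
  have hX := hJ le_sup_right
  have hbox : ∀ e ∈ exponentBox σ q, monomial e 1 ∈ T := by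
    by_contra! hbad
    obtain ⟨e, he, hmax⟩ := Finset.exists_max_image {e ∈ exponentBox σ q | monomial e 1 ∉ T}
      m.toSyn (by simpa [Finset.Nonempty] using hbad)
    rw [Finset.mem_filter] at he
    refine he.2 ?_
    by_cases hae : a ≤ e
    · refine monomial_one_mem_of_forall_lt m ha hmin hP (hJ (le_sup_of_le_left le_sup_right)) hX
        hae fun e' he' hlt => ?_
      by_contra hnot
      exact (hmax e' (Finset.mem_filter.2 ⟨he', hnot⟩)).not_gt hlt
    · exact Submodule.mem_sup_left (Submodule.subset_span ⟨e, Finset.mem_filter.2 ⟨he.1, hae⟩, rfl⟩)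
  exact eq_top_iff.2 fun g _ => mem_of_forall_coeff_notMem hP hX fun e he _ => hbox e he

end MvPowerSeries

namespace PadicInt

variable {p : ℕ} [Fact p.Prime]

theorem card_quotient_span_pow (ν : ℕ) :
    Nat.card (ℤ_[p] ⧸ Ideal.span {(p : ℤ_[p]) ^ ν}) = p ^ ν := by
  rw [← ker_toZModPow, Nat.card_congr
    (RingHom.quotientKerEquivOfSurjective (ZMod.ringHom_surjective (toZModPow ν))).toEquiv,
    Nat.card_zmod]

variable {σ : Type*}

theorem exists_isUnit_coeff_minimal (m : MonomialOrder σ) {f : MvPowerSeries σ ℤ_[p]}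
    (hf : f ∉ Ideal.span {(p : MvPowerSeries σ ℤ_[p])}) :
    ∃ a, IsUnit (coeff a f) ∧
      ∀ c, coeff c f ∉ Ideal.span {(p : ℤ_[p])} → m.toSyn a ≤ m.toSyn c := by
  rw [← map_natCast (C (σ := σ))] at hf
  obtain ⟨c, hc⟩ := exists_coeff_notMem_span_of_notMem hf
  obtain ⟨_, ⟨a, ha, rfl⟩, hmin⟩ :=
    wellFounded_lt.has_min (m.toSyn '' {c | coeff c f ∉ Ideal.span {(p : ℤ_[p])}}) ⟨_, c, hc, rfl⟩
  refine ⟨a, IsLocalRing.notMem_maximalIdeal.1 ?_, fun c hc => not_lt.1 (hmin _ ⟨c, hc, rfl⟩)⟩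
  rwa [maximalIdeal_eq_span_p]

variable [Fintype σ] [LinearOrder σ]

theorem finite_and_card_mvPowerSeries_quotient_le (m : MonomialOrder σ) {f : MvPowerSeries σ ℤ_[p]}
    {a : σ →₀ ℕ} (ha : IsUnit (coeff a f))
    (hmin : ∀ c, coeff c f ∉ Ideal.span {(p : ℤ_[p])} → m.toSyn a ≤ m.toSyn c)
    {K : Ideal (MvPowerSeries σ ℤ_[p])} {ν q : ℕ} (hfK : f ∈ K)
    (hpK : (p : MvPowerSeries σ ℤ_[p]) ^ ν ∈ K)
    (hXK : ∀ i, X i ^ q ∈ Ideal.span {(p : MvPowerSeries σ ℤ_[p])} ⊔ K) :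
    Finite (MvPowerSeries σ ℤ_[p] ⧸ K) ∧
      Nat.card (MvPowerSeries σ ℤ_[p] ⧸ K) ≤ p ^ (ν * (∑ i, a i) * q ^ (Fintype.card σ - 1)) := by
  set S : Finset (σ →₀ ℕ) := {e ∈ exponentBox σ q | ¬ a ≤ e}
  have hmod_p : Submodule.span ℤ_[p] ((fun e => monomial e (1 : ℤ_[p])) '' S) ⊔
      (K ⊔ Ideal.span {algebraMap ℤ_[p] _ (p : ℤ_[p])}).restrictScalars ℤ_[p] = ⊤ := by
    have h := span_monomial_sup_eq_top m ha hmin q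
    rw [eq_top_iff] at h ⊢
    refine h.trans (sup_le_sup_left (Submodule.restrictScalars_mono ℤ_[p] ?_) _)
    rw [Ideal.map_span, Set.image_singleton, map_natCast, map_natCast, sup_comm K]
    refine sup_le (sup_le le_sup_left (le_sup_of_le_right ?_)) (Ideal.span_le.2 ?_)
    · exact (Ideal.span_singleton_le_iff_mem K).2 hfK
    · rintro _ ⟨i, rfl⟩
      exact hXK i
  have hmod_pν := Submodule.sup_span_pow_restrictScalars_eq_top hmod_p ν
  rw [map_natCast, sup_eq_left.2 ((Ideal.span_singleton_le_iff_mem K).2 hpK)] at hmod_pν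
  have hspan := Submodule.span_image_mk_eq_top hmod_pν
  rw [Set.image_image, Set.image_eq_range] at hspan
  have hann : ∀ t ∈ Ideal.span {(p : ℤ_[p]) ^ ν}, ∀ x : MvPowerSeries σ ℤ_[p] ⧸ K, t • x = 0 := by
    intro t ht x
    obtain ⟨u, rfl⟩ := Ideal.mem_span_singleton'.1 ht
    obtain ⟨y, rfl⟩ := Ideal.Quotient.mk_surjective x
    rw [← Ideal.Quotient.mkₐ_eq_mk ℤ_[p], ← map_smul, Ideal.Quotient.mkₐ_eq_mk,
      Ideal.Quotient.eq_zero_iff_mem, Algebra.smul_def, map_mul, map_pow, map_natCast]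
    exact K.mul_mem_right _ (K.mul_mem_left _ hpK)
  have : Finite (ℤ_[p] ⧸ Ideal.span {(p : ℤ_[p]) ^ ν}) :=
    Nat.finite_of_card_ne_zero (by simp [card_quotient_span_pow, (Fact.out : p.Prime).ne_zero])
  obtain ⟨hfin, hcard⟩ := finite_and_card_le_of_span_range_eq_top _ hann hspan
  refine ⟨hfin, hcard.trans ?_⟩
  rw [card_quotient_span_pow, ← pow_mul, mul_assoc]
  simp only [Finset.coe_sort_coe, Fintype.card_coe]
  exact Nat.pow_le_pow_right (Fact.out : p.Prime).pos
    (Nat.mul_le_mul_left _ (card_filter_not_le_exponentBox a q))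

end PadicInt

theorem stmt17_general (p : ℕ) [Fact p.Prime] (d : ℕ)
    (f : MvPowerSeries (Fin d) ℤ_[p])
    (hf : f ∉ Ideal.span {(p : MvPowerSeries (Fin d) ℤ_[p])})
    (r : ℕ)
    (N : Type*) [AddCommGroup N] [Module (MvPowerSeries (Fin d) ℤ_[p]) N]
    (hsurj : ∃ g : (Fin r → (MvPowerSeries (Fin d) ℤ_[p] ⧸ Ideal.span {f}))
        →ₗ[MvPowerSeries (Fin d) ℤ_[p]] N, Function.Surjective g)
    (ν : ℕ) :
    ∃ C : ℕ, ∀ n : ℕ,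
      Finite (N ⧸ ((Ideal.span {(p : MvPowerSeries (Fin d) ℤ_[p]) ^ ν} ⊔
          Ideal.span (Set.range fun i : Fin d =>
            ((1 + MvPowerSeries.X i) ^ (p ^ n) - 1 : MvPowerSeries (Fin d) ℤ_[p]))) •
          (⊤ : Submodule (MvPowerSeries (Fin d) ℤ_[p]) N))) ∧
      Nat.card (N ⧸ ((Ideal.span {(p : MvPowerSeries (Fin d) ℤ_[p]) ^ ν} ⊔
          Ideal.span (Set.range fun i : Fin d =>
            ((1 + MvPowerSeries.X i) ^ (p ^ n) - 1 : MvPowerSeries (Fin d) ℤ_[p]))) •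
          (⊤ : Submodule (MvPowerSeries (Fin d) ℤ_[p]) N)))
        ≤ p ^ (C * p ^ (n * (d - 1))) := by
  obtain ⟨g, hg⟩ := hsurj
  obtain ⟨a, ha, hmin⟩ := PadicInt.exists_isUnit_coeff_minimal MonomialOrder.lex hf
  refine ⟨ν * (∑ i, a i) * r, fun n => ?_⟩
  set I := Ideal.span (Set.range fun i : Fin d =>
    ((1 + X i) ^ (p ^ n) - 1 : MvPowerSeries (Fin d) ℤ_[p]))
  have hXK (i : Fin d) : X i ^ p ^ n ∈ Ideal.span {(p : MvPowerSeries (Fin d) ℤ_[p])} ⊔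
      (Ideal.span {f} ⊔ (Ideal.span {(p : MvPowerSeries (Fin d) ℤ_[p]) ^ ν} ⊔ I)) := by
    have hI : (1 + X i) ^ p ^ n - 1 ∈ I := Ideal.subset_span ⟨i, rfl⟩
    have hle : Ideal.span {(1 + X i) ^ p ^ n - 1} ≤
        Ideal.span {f} ⊔ (Ideal.span {(p : MvPowerSeries (Fin d) ℤ_[p]) ^ ν} ⊔ I) :=
      (Ideal.span_singleton_le_iff_mem _).2 (Ideal.mem_sup_right (Ideal.mem_sup_right hI))
    exact sup_le_sup_left hle _ (pow_prime_pow_mem_span_sup Fact.out (X i) n)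
  obtain ⟨hfin, hcard⟩ :=
    PadicInt.finite_and_card_mvPowerSeries_quotient_le MonomialOrder.lex ha hmin
    (Ideal.mem_sup_left (Ideal.mem_span_singleton_self f))
    (Ideal.mem_sup_right (Ideal.mem_sup_left (Ideal.mem_span_singleton_self _))) hXK
  obtain ⟨hfinN, hcardN⟩ := finite_and_card_quotient_smul_top_le g hg
    (Ideal.span {(p : MvPowerSeries (Fin d) ℤ_[p]) ^ ν} ⊔ I)
  refine ⟨hfinN, hcardN.trans ((Nat.pow_le_pow_left hcard r).trans_eq ?_)⟩
  rw [Fintype.card_fin, ← pow_mul, ← pow_mul]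
  ring

/-- Let `p` be a prime, `d ≥ 1`, `Λ = ℤ_p[[X_1,…,X_d]]`, `I_n` the ideal
generated by `(1+X_i)^{p^n} - 1`, and let `f ∈ Λ`, `f ∉ pΛ`.  If `N` is a `Λ`-module
admitting a surjection `(Λ/(f))^r → N`, then for every `ν ≥ 1` there is `C ≥ 0` such that
for all `n` the quotient `N/(p^ν N + I_n N)` is finite of cardinality at most
`p^{C·p^{n(d-1)}}`. -/
theorem stmt17 (p : ℕ) [Fact p.Prime] (d : ℕ) (hd : 1 ≤ d)
    (f : MvPowerSeries (Fin d) ℤ_[p])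
    (hf : f ∉ Ideal.span {(p : MvPowerSeries (Fin d) ℤ_[p])})
    (r : ℕ) (hr : 1 ≤ r)
    (N : Type*) [AddCommGroup N] [Module (MvPowerSeries (Fin d) ℤ_[p]) N]
    (hsurj : ∃ g : (Fin r → (MvPowerSeries (Fin d) ℤ_[p] ⧸ Ideal.span {f}))
        →ₗ[MvPowerSeries (Fin d) ℤ_[p]] N, Function.Surjective g)
    (ν : ℕ) (hν : 1 ≤ ν) :
    ∃ C : ℕ, ∀ n : ℕ,
      Finite (N ⧸ ((Ideal.span {(p : MvPowerSeries (Fin d) ℤ_[p]) ^ ν} ⊔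
          Ideal.span (Set.range fun i : Fin d =>
            ((1 + MvPowerSeries.X i) ^ (p ^ n) - 1 : MvPowerSeries (Fin d) ℤ_[p]))) •
          (⊤ : Submodule (MvPowerSeries (Fin d) ℤ_[p]) N))) ∧
      Nat.card (N ⧸ ((Ideal.span {(p : MvPowerSeries (Fin d) ℤ_[p]) ^ ν} ⊔
          Ideal.span (Set.range fun i : Fin d =>
            ((1 + MvPowerSeries.X i) ^ (p ^ n) - 1 : MvPowerSeries (Fin d) ℤ_[p]))) •
          (⊤ : Submodule (MvPowerSeries (Fin d) ℤ_[p]) N)))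
        ≤ p ^ (C * p ^ (n * (d - 1))) :=
  stmt17_general p d f hf r N hsurj ν
end

section
/- Let p be a prime, G a group of order p, and M an abelian group equipped with an action of G by group automorphisms. Suppose M is generated, as an abelian group, by at most r elements. Then the first group cohomology H^1(G, M) has cardinality at most p^r, and the quotient M^G / N_G(M) has cardinality at most p^r, where M^G is the subgroup of G-fixed points and N_G : M → M is the norm map N_G(m) := Σ_{σ ∈ G} σ·m. -/
/-!
Both groups are quotients of subgroups of `M` annihilated by `p`. The 1-cocycles embed into `M`
by evaluation at a generator `σ` of the cyclic group `G`, and `|G| • f` is the coboundary of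
`-∑ₕ f h`; on `M^G` the norm map is multiplication by `|G|`. A subgroup of an abelian group
generated by `r` elements is again generated by `r` elements, since its preimage in `ℤ^r` is free
of rank at most `r`. So each group is a `ZMod p`-module spanned by at most `r` elements.
-/

open Function

universe u

namespace AddGroup

variable {A B : Type*} [AddCommGroup A] [AddCommGroup B]

theorem card_le_pow_rank (p : ℕ) [NeZero p] [Module (ZMod p) A] [FG A] :
    Nat.card A ≤ p ^ rank A := by
  obtain ⟨S, hcard, hS⟩ := rank_spec A
  have hspan : Submodule.span (ZMod p) (Set.range (Subtype.val : S → A)) = ⊤ := by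
    refine eq_top_iff.2 fun a _ => ?_
    have : AddSubgroup.closure (S : Set A) ≤
        (Submodule.span (ZMod p) (Set.range (Subtype.val : S → A))).toAddSubgroup :=
      (AddSubgroup.closure_le _).2 (by simp [Submodule.subset_span])
    exact this (hS ▸ AddSubgroup.mem_top a)
  calc Nat.card A ≤ Nat.card (S → ZMod p) :=
        Nat.card_le_card_of_surjective _
          ((span_range_eq_top_iff_surjective_fintypeLinearCombination _ _).1 hspan)
    _ = p ^ rank A := by simp [Nat.card_fun, hcard]

theorem rank_le_finrank [FG A] [Module.Free ℤ A] : rank A ≤ Module.finrank ℤ A := by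
  classical
  let b := Module.Free.chooseBasis ℤ A
  calc rank A ≤ (Finset.univ.image b).card := rank_le (by
        rw [Finset.coe_image, Finset.coe_univ, Set.image_univ,
          ← Submodule.span_int_eq_addSubgroupClosure, b.span_eq]; rfl)
    _ ≤ _ := Finset.card_image_le.trans_eq (Module.finrank_eq_card_chooseBasisIndex ℤ A).symm

instance _root_.AddSubgroup.fg_of_fg [FG A] (H : AddSubgroup A) : FG H :=
  Module.Finite.iff_addGroup_fg.1 (inferInstanceAs (Module.Finite ℤ H.toIntSubmodule))

theorem _root_.AddSubgroup.rank_le [FG A] (H : AddSubgroup A) : rank H ≤ rank A := by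
  obtain ⟨S, hcard, hS⟩ := rank_spec A
  let π := Fintype.linearCombination ℤ (Subtype.val : S → A)
  have hπ : Surjective π := by
    rw [← span_range_eq_top_iff_surjective_fintypeLinearCombination,
      ← Submodule.toAddSubgroup_inj, Submodule.span_int_eq_addSubgroupClosure, Subtype.range_coe]
    exact hS
  let H' := H.toIntSubmodule.comap π
  let ρ : H' →+ H :=
    (π.toAddMonoidHom.comp H'.subtype.toAddMonoidHom).codRestrict H fun x => x.2
  have hρ : Surjective ρ := fun h => by
    obtain ⟨c, hc⟩ := hπ h
    exact ⟨⟨c, show π c ∈ H from hc ▸ h.2⟩, Subtype.ext hc⟩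
  have : FG H' := Module.Finite.iff_addGroup_fg.1 inferInstance
  calc rank H ≤ rank H' := rank_le_of_surjective ρ hρ
    _ ≤ Module.finrank ℤ H' := rank_le_finrank
    _ ≤ Module.finrank ℤ (S → ℤ) := Submodule.finrank_le H'
    _ = rank A := by simp [hcard]

theorem fg_of_injective [FG A] {f : B →+ A} (hf : Injective f) : FG B :=
  fg_of_surjective (f := (AddMonoidHom.ofInjective hf).symm.toAddMonoidHom) (AddEquiv.surjective _)

theorem rank_le_of_injective [FG A] [FG B] (f : B →+ A) (hf : Injective f) : rank B ≤ rank A :=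
  (rank_congr (AddMonoidHom.ofInjective hf)).trans_le f.range.rank_le

theorem card_le_pow_rank_of_subquotient {M : Type*} [AddCommGroup M] [FG M] {p : ℕ} [NeZero p]
    (i : B →+ M) (hi : Injective i) (f : B →+ A) (hf : Surjective f) (hA : ∀ a : A, p • a = 0) :
    Nat.card A ≤ p ^ rank M := by
  have := fg_of_injective hi
  have := fg_of_surjective hf
  have : Module (ZMod p) A := AddCommGroup.zmodModule hA
  calc Nat.card A ≤ p ^ rank A := card_le_pow_rank p
    _ ≤ p ^ rank M := Nat.pow_le_pow_right (NeZero.pos p)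
      ((rank_le_of_surjective f hf).trans (rank_le_of_injective i hi))

end AddGroup

namespace groupCohomology

variable {k G : Type u} [CommRing k] [Group G] {A : Rep k G}

theorem cocycles₁_ext_of_generator {σ : G} (hσ : ∀ g, g ∈ Subgroup.zpowers σ)
    {f₁ f₂ : cocycles₁ A} (h : f₁ σ = f₂ σ) : f₁ = f₂ := by
  rw [← sub_eq_zero]
  set f := f₁ - f₂
  have hf : f σ = 0 := sub_eq_zero.2 h
  have hcocycle := (mem_cocycles₁_iff (f : G → A)).1 f.2
  ext g
  show f g = 0
  rw [Subgroup.zpowers_eq_closure] at hσ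
  induction hσ g using Subgroup.closure_induction with
  | mem g hg => rwa [Set.mem_singleton_iff.1 hg]
  | one => exact cocycles₁_map_one f
  | mul g h _ _ hg hh => rw [hcocycle, hg, hh, map_zero, add_zero]
  | inv g _ hg => simpa [hg] using (hcocycle g⁻¹ g).symm

theorem card_nsmul_H1_eq_zero [Fintype G] (x : H1 A) : Fintype.card G • x = 0 := by
  induction x using H1_induction_on with | h f => ?_
  rw [← map_nsmul, H1π_eq_zero_iff]
  refine ⟨-(∑ h : G, f h), funext fun g => ?_⟩
  have hρ : ∀ h, A.ρ g (f h) = f (g * h) - f g := fun h => by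
    rw [(mem_cocycles₁_iff (f : G → A)).1 f.2 g h]; abel
  simp only [d₀₁_hom_apply, map_neg, map_sum, sub_neg_eq_add, hρ, Finset.sum_sub_distrib,
    Finset.sum_const, Finset.card_univ]
  rw [Fintype.sum_equiv (Equiv.mulLeft g) (fun h => f (g * h)) (fun h => f h) fun _ => rfl]
  show _ = Fintype.card G • f g
  abel

end groupCohomology

/-- Let `p` be a prime, `G` a group of order `p`, and `M` an abelian
group with a `G`-action by automorphisms, generated (as an abelian group) by at most `r`
elements.  Then `|H¹(G, M)| ≤ p^r` and `|M^G / N_G(M)| ≤ p^r`, where `N_G(m) = ∑_σ σ•m`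
is the norm map. -/
theorem stmt18 (p : ℕ) (hp : p.Prime) (G : Type) [Group G] [Fintype G]
    (hG : Fintype.card G = p)
    (M : Type) [AddCommGroup M] [DistribMulAction G M]
    (r : ℕ)
    (hgen : ∃ S : Finset M, S.card ≤ r ∧ AddSubgroup.closure (S : Set M) = ⊤) :
    Nat.card (groupCohomology.H1 (Rep.ofDistribMulAction ℤ G M)) ≤ p ^ r ∧
    Nat.card ((FixedPoints.addSubgroup G M) ⧸
        ((∑ σ : G, DistribMulAction.toAddMonoidHom M σ).range.addSubgroupOf (FixedPoints.addSubgroup G M)))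
      ≤ p ^ r := by
  obtain ⟨S, hS, hclos⟩ := hgen
  have : AddGroup.FG M := ⟨⟨S, hclos⟩⟩
  have : NeZero p := ⟨hp.ne_zero⟩
  have hrank : p ^ AddGroup.rank M ≤ p ^ r :=
    Nat.pow_le_pow_right hp.pos ((AddGroup.rank_le hclos).trans hS)
  have : Fact p.Prime := ⟨hp⟩
  have : IsCyclic G := isCyclic_of_prime_card (by rw [Nat.card_eq_fintype_card, hG])
  obtain ⟨σ, hσ⟩ := IsCyclic.exists_generator (α := G)
  have hnorm : ∀ m ∈ FixedPoints.addSubgroup G M, ∑ τ : G, τ • m = p • m := fun m hm => by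
    rw [Finset.sum_congr rfl fun τ _ => hm τ, Finset.sum_const, Finset.card_univ, hG]
  constructor
  · refine le_trans ?_ hrank
    exact AddGroup.card_le_pow_rank_of_subquotient
      ((Pi.evalAddMonoidHom _ σ).comp (groupCohomology.cocycles₁ _).subtype.toAddMonoidHom)
      (fun _ _ h => groupCohomology.cocycles₁_ext_of_generator hσ h)
      (groupCohomology.H1π _).hom.toAddMonoidHom ((ModuleCat.epi_iff_surjective _).1 inferInstance)
      fun x => hG ▸ groupCohomology.card_nsmul_H1_eq_zero x
  · refine le_trans ?_ hrank
    refine AddGroup.card_le_pow_rank_of_subquotient (FixedPoints.addSubgroup G M).subtype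
      Subtype.val_injective (QuotientAddGroup.mk' _) (QuotientAddGroup.mk'_surjective _) fun x => ?_
    induction x using QuotientAddGroup.induction_on with | H m => ?_
    rw [← QuotientAddGroup.mk_nsmul, QuotientAddGroup.eq_zero_iff, AddSubgroup.mem_addSubgroupOf]
    exact ⟨m, by
      simpa only [AddMonoidHom.finsetSum_apply, DistribMulAction.toAddMonoidHom_apply,
        AddSubgroup.coe_nsmul] using hnorm m m.2⟩
end
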